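/- arXiv:0711.3073 — 10 statements merged into one kernel-verified Lean document; each statement's English description precedes it below -/
import Mathlib

section
/- Let q ∈ ℝ, let H be a complex Hilbert space with orthonormal basis (e_n)_{n∈ℕ}, let (τ_n)_{n∈ℕ} be nonnegative real numbers, and let S be the densely defined operator with domain D := span{e_n : n ∈ ℕ} given by S e_n = τ_n e_{n+1}. (Then D ⊆ dom S*, with S* e_n = τ_{n−1} e_{n−1} for n ≥ 1 and S* e_0 = 0.) If S* S f − q S S* f = f for every f ∈ D, then τ_n = √([n+1]_q) for every n ∈ ℕ; in particular such nonnegative weights can exist only if q ≥ −1. -/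
open scoped ComplexInnerProductSpace

noncomputable section

/-- The `q`-number `[n]_q`. -/
def qNum (q : ℝ) (n : ℕ) : ℝ := if q = 1 then (n : ℝ) else (1 - q ^ n) / (1 - q)

lemma qNum_one (q : ℝ) : qNum q 1 = 1 := by
  unfold qNum
  by_cases h : q = 1
  · simp [h]
  · have hq : 1 - q ≠ 0 := sub_ne_zero.mpr (Ne.symm h)
    rw [if_neg h, pow_one, div_self hq]

lemma qNum_succ (q : ℝ) (n : ℕ) : qNum q (n + 2) = 1 + q * qNum q (n + 1) := by
  unfold qNum
  by_cases h : q = 1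
  · simp [h]; ring
  · have hq : 1 - q ≠ 0 := sub_ne_zero.mpr (Ne.symm h)
    rw [if_neg h, if_neg h]
    field_simp
    ring

/-- If `S` is the unilateral weighted shift with nonnegative weights `τ`
with respect to an orthonormal basis `(e n)`, with domain the linear span of the basis
vectors, and `S* S f - q S S* f = f` holds on that span, then `τ n = √([n+1]_q)` for all
`n`, and necessarily `q ≥ -1`. -/
theorem stmt0 (q : ℝ) {H : Type*} [NormedAddCommGroup H] [InnerProductSpace ℂ H]
    [CompleteSpace H] (e : HilbertBasis ℕ ℂ H) (τ : ℕ → ℝ) (hτ : ∀ n, 0 ≤ τ n)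
    (S : H →ₗ.[ℂ] H)
    (hdom : S.domain = Submodule.span ℂ (Set.range (e : ℕ → H)))
    (hval : ∀ (n : ℕ) (hn : e n ∈ S.domain), S ⟨e n, hn⟩ = (τ n : ℂ) • e (n + 1))
    (hrel : ∀ f (hf : f ∈ S.domain),
      ∃ (h1 : (S ⟨f, hf⟩ : H) ∈ S.adjoint.domain) (h2 : f ∈ S.adjoint.domain)
        (h3 : (S.adjoint ⟨f, h2⟩ : H) ∈ S.domain),
        (S.adjoint ⟨S ⟨f, hf⟩, h1⟩ : H) - (q : ℂ) • (S ⟨S.adjoint ⟨f, h2⟩, h3⟩ : H) = f) :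
    (∀ n, τ n = Real.sqrt (qNum q (n + 1))) ∧ -1 ≤ q := by
  classical
  have horth := orthonormal_iff_ite.mp e.orthonormal
  have hmem : ∀ n, e n ∈ S.domain := fun n => by
    rw [hdom]; exact Submodule.subset_span ⟨n, rfl⟩
  have hT : Dense (S.domain : Set H) := by
    rw [Submodule.dense_iff_topologicalClosure_eq_top, hdom]
    exact e.dense_span
  -- key tool: compute adjoint values from inner products against basis vectors
  have hSadj : ∀ (w : H) (hw : w ∈ S.adjoint.domain) (x₀ : H),
      (∀ m, ⟪x₀, e m⟫ = ⟪w, (τ m : ℂ) • e (m + 1)⟫) →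
      (S.adjoint ⟨w, hw⟩ : H) = x₀ := by
    intro w hw x₀ hx₀
    apply LinearPMap.adjoint_apply_eq hT
    have main : ∀ x ∈ Submodule.span ℂ (Set.range (e : ℕ → H)),
        ∀ hx : x ∈ S.domain, ⟪x₀, x⟫ = ⟪w, (S ⟨x, hx⟩ : H)⟫ := by
      intro x hx
      induction hx using Submodule.span_induction with
      | mem v hv =>
        obtain ⟨m, rfl⟩ := hv
        intro hx
        rw [hval m hx]
        exact hx₀ m
      | zero =>
        intro hx
        have h0 : (⟨(0 : H), hx⟩ : S.domain) = 0 := rfl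
        rw [h0, S.map_zero]
        simp
      | add x y hx' hy' ihx ihy =>
        intro hxy
        have hx : x ∈ S.domain := by rw [hdom]; exact hx'
        have hy : y ∈ S.domain := by rw [hdom]; exact hy'
        have hsum : (⟨x + y, hxy⟩ : S.domain) = ⟨x, hx⟩ + ⟨y, hy⟩ := rfl
        rw [hsum, S.map_add, inner_add_right, inner_add_right, ihx hx, ihy hy]
      | smul c x hx' ih =>
        intro hcx
        have hx : x ∈ S.domain := by rw [hdom]; exact hx'
        have hs : (⟨c • x, hcx⟩ : S.domain) = c • ⟨x, hx⟩ := rfl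
        rw [hs, S.map_smul, inner_smul_right, inner_smul_right, ih hx]
    rintro ⟨x, hx⟩
    exact main x (by rw [← hdom]; exact hx) hx
  -- a scalar equals 1 if c • e k = e k
  have hscalar : ∀ (c : ℂ) (k : ℕ), c • e k = e k → c = 1 := by
    intro c k h
    have hk : e k ≠ 0 := e.orthonormal.ne_zero k
    have h' : (c - 1) • e k = 0 := by rw [sub_smul, one_smul, h, sub_self]
    rcases smul_eq_zero.mp h' with h'' | h''
    · exact sub_eq_zero.mp h''
    · exact absurd h'' hk
  -- general: S† S e n = τ n ^ 2 • e n
  have hAgen : ∀ (n : ℕ) (h1 : (S ⟨e n, hmem n⟩ : H) ∈ S.adjoint.domain),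
      (S.adjoint ⟨S ⟨e n, hmem n⟩, h1⟩ : H) = ((τ n : ℂ) ^ 2) • e n := by
    intro n h1
    apply hSadj
    intro m
    rw [hval n (hmem n)]
    simp only [inner_smul_left, inner_smul_right, horth, Complex.conj_ofReal, map_pow,
      add_left_inj]
    by_cases hm : n = m
    · subst hm; simp; ring
    · simp [hm]
  -- the scalar relations
  have h0 : τ 0 ^ 2 = 1 := by
    obtain ⟨h1, h2, h3, heq⟩ := hrel (e 0) (hmem 0)
    have hA := hAgen 0 h1
    have hB : (S.adjoint ⟨e 0, h2⟩ : H) = 0 := by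
      apply hSadj
      intro m
      simp only [inner_zero_left, inner_smul_right, horth]
      rw [if_neg (by omega : ¬(0 = m + 1))]
      simp
    have hzero : (⟨(S.adjoint ⟨e 0, h2⟩ : H), h3⟩ : S.domain) = 0 := Subtype.ext hB
    have hC : (S ⟨(S.adjoint ⟨e 0, h2⟩ : H), h3⟩ : H) = 0 := by
      rw [hzero]; exact S.map_zero
    rw [hA, hC] at heq
    have hc : ((τ 0 : ℂ) ^ 2) = 1 := by
      apply hscalar _ 0
      simpa using heq
    exact_mod_cast hc
  have hstep : ∀ n, τ (n + 1) ^ 2 = 1 + q * τ n ^ 2 := by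
    intro n
    obtain ⟨h1, h2, h3, heq⟩ := hrel (e (n + 1)) (hmem (n + 1))
    have hA := hAgen (n + 1) h1
    have hB : (S.adjoint ⟨e (n + 1), h2⟩ : H) = (τ n : ℂ) • e n := by
      apply hSadj
      intro m
      simp only [inner_smul_left, inner_smul_right, horth, Complex.conj_ofReal, add_left_inj]
      by_cases hm : n = m
      · subst hm; simp
      · simp [hm]
    have hBd : (⟨(S.adjoint ⟨e (n + 1), h2⟩ : H), h3⟩ : S.domain)
        = (τ n : ℂ) • ⟨e n, hmem n⟩ := Subtype.ext hB
    have hC : (S ⟨(S.adjoint ⟨e (n + 1), h2⟩ : H), h3⟩ : H)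
        = (τ n : ℂ) • ((τ n : ℂ) • e (n + 1)) := by
      rw [hBd, S.map_smul, hval n (hmem n)]
    rw [hA, hC, smul_smul, smul_smul, ← sub_smul] at heq
    have hc := hscalar _ _ heq
    have hre : (τ (n + 1) : ℝ) ^ 2 - q * τ n * τ n = 1 := by exact_mod_cast hc
    nlinarith [hre]
  have hsq : ∀ n, τ n ^ 2 = qNum q (n + 1) := by
    intro n
    induction n with
    | zero => rw [h0, qNum_one]
    | succ k ih => rw [hstep k, ih, qNum_succ]
  constructor
  · intro n
    rw [← hsq n, Real.sqrt_sq (hτ n)]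
  · have h2 : qNum q 2 = 1 + q := by
      rw [show (2 : ℕ) = 0 + 2 by rfl, qNum_succ, qNum_one]; ring
    nlinarith [sq_nonneg (τ 1), hsq 1, h2]
end
end

section
/- Let q ∈ ℝ and let S be a densely defined operator in a complex Hilbert space H satisfying (O_{q,D}) on a dense subspace D, and assume D is a core of S. Then dom S̄ ⊆ dom S* and ⟨S̄ f, S̄ g⟩ − q ⟨S* f, S* g⟩ = ⟨f, g⟩ for all f, g ∈ dom S̄; in particular S satisfies (O_{q,w}). -/
noncomputable section

open Filter Topology

variable {H : Type*} [NormedAddCommGroup H] [InnerProductSpace ℂ H] [CompleteSpace H]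

/-- `S` satisfies the commutation relation `(O_{q,D})` on the dense subspace `D`:
`S` is densely defined and closable, `D ⊆ dom(S* S̄) ∩ dom(S̄ S*)` and
`S* S̄ f - q S̄ S* f = f` for `f ∈ D`. -/
structure SatOqD (q : ℝ) (S : H →ₗ.[ℂ] H) (D : Submodule ℂ H) : Prop where
  denseDom : Dense (S.domain : Set H)
  denseD : Dense (D : Set H)
  closable : S.IsClosable
  memC : ∀ f, f ∈ D → f ∈ S.closure.domain
  memCA : ∀ f (hf : f ∈ D), (S.closure ⟨f, memC f hf⟩ : H) ∈ S.adjoint.domain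
  memA : ∀ f, f ∈ D → f ∈ S.adjoint.domain
  memAC : ∀ f (hf : f ∈ D), (S.adjoint ⟨f, memA f hf⟩ : H) ∈ S.closure.domain
  eqn : ∀ f (hf : f ∈ D),
    (S.adjoint ⟨S.closure ⟨f, memC f hf⟩, memCA f hf⟩ : H)
      - (q : ℂ) • (S.closure ⟨S.adjoint ⟨f, memA f hf⟩, memAC f hf⟩ : H) = f

/-- `S` satisfies the weak commutation relation `(O_{q,w})`:
`⟨S f, S g⟩ - q ⟨S* f, S* g⟩ = ⟨f, g⟩` for all `f, g ∈ dom S ∩ dom S*`. -/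
def SatOqW (q : ℝ) (S : H →ₗ.[ℂ] H) : Prop :=
  ∀ f g (hf : f ∈ S.domain) (hf' : f ∈ S.adjoint.domain)
    (hg : g ∈ S.domain) (hg' : g ∈ S.adjoint.domain),
    (inner ℂ (S ⟨f, hf⟩) (S ⟨g, hg⟩) : ℂ)
      - (q : ℂ) * inner ℂ (S.adjoint ⟨f, hf'⟩) (S.adjoint ⟨g, hg'⟩) = inner ℂ f g

/-- `D` is a core of the closable operator `S`: `D ⊆ dom S` and the closure of `S|_D`
equals `S̄`. -/
def IsCoreOf (S : H →ₗ.[ℂ] H) (D : Submodule ℂ H) : Prop :=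
  D ≤ S.domain ∧ (S.domRestrict D).closure = S.closure

lemma adjCl (S : H →ₗ.[ℂ] H) (hd : Dense (S.domain : Set H)) (hc : S.IsClosable)
    (y : S.adjoint.domain) (x : S.closure.domain) :
    (inner ℂ (S.adjoint y : H) (x : H) : ℂ) = inner ℂ (y : H) (S.closure x : H) := by
  have hG := hc.graph_closure_eq_closure_graph
  have hCset : IsClosed {p : H × H |
      (inner ℂ (S.adjoint y : H) p.1 : ℂ) = inner ℂ (y : H) p.2} := by
    apply isClosed_eq
    · exact (continuous_const.inner continuous_fst)
    · exact (continuous_const.inner continuous_snd)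
  have hsub : (S.graph : Set (H × H)) ⊆ {p : H × H |
      (inner ℂ (S.adjoint y : H) p.1 : ℂ) = inner ℂ (y : H) p.2} := by
    rintro p hp
    rcases S.mem_graph_iff.1 hp with ⟨z, hz1, hz2⟩
    simp only [Set.mem_setOf_eq, ← hz1, ← hz2]
    exact LinearPMap.adjoint_isFormalAdjoint hd y z
  have hmem : ((x : H), (S.closure x : H)) ∈ S.closure.graph := S.closure.mem_graph x
  rw [← hG] at hmem
  have := closure_minimal hsub hCset
  have hmem2 : ((x : H), (S.closure x : H)) ∈ closure (S.graph : Set (H × H)) := by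
    rw [← Submodule.topologicalClosure_coe]; exact hmem
  exact this hmem2

lemma L2 {q : ℝ} {S : H →ₗ.[ℂ] H} {D : Submodule ℂ H} (hS : SatOqD q S D)
    (u : H) (hu : u ∈ D) (v : H) (hv : v ∈ D) :
    (inner ℂ (S.closure ⟨u, hS.memC u hu⟩ : H) (S.closure ⟨v, hS.memC v hv⟩ : H) : ℂ)
      - (q : ℂ) * inner ℂ (S.adjoint ⟨u, hS.memA u hu⟩ : H) (S.adjoint ⟨v, hS.memA v hv⟩ : H)
      = inner ℂ u v := by
  have h1 : (inner ℂ (S.closure ⟨u, hS.memC u hu⟩ : H) (S.closure ⟨v, hS.memC v hv⟩ : H) : ℂ)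
      = inner ℂ u (S.adjoint ⟨S.closure ⟨v, hS.memC v hv⟩, hS.memCA v hv⟩ : H) := by
    have t : (inner ℂ (S.adjoint ⟨S.closure ⟨v, hS.memC v hv⟩, hS.memCA v hv⟩ : H) u : ℂ)
        = inner ℂ (S.closure ⟨v, hS.memC v hv⟩ : H) (S.closure ⟨u, hS.memC u hu⟩ : H) :=
      adjCl S hS.denseDom hS.closable ⟨S.closure ⟨v, hS.memC v hv⟩, hS.memCA v hv⟩
        ⟨u, hS.memC u hu⟩
    calc (inner ℂ (S.closure ⟨u, hS.memC u hu⟩ : H) (S.closure ⟨v, hS.memC v hv⟩ : H) : ℂ)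
        = starRingEnd ℂ (inner ℂ (S.adjoint ⟨S.closure ⟨v, hS.memC v hv⟩, hS.memCA v hv⟩ : H) u) := by
          rw [t, inner_conj_symm]
      _ = inner ℂ u (S.adjoint ⟨S.closure ⟨v, hS.memC v hv⟩, hS.memCA v hv⟩ : H) := by
          rw [inner_conj_symm]
  have h2 : (inner ℂ (S.adjoint ⟨u, hS.memA u hu⟩ : H) (S.adjoint ⟨v, hS.memA v hv⟩ : H) : ℂ)
      = inner ℂ u (S.closure ⟨S.adjoint ⟨v, hS.memA v hv⟩, hS.memAC v hv⟩ : H) := by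
    exact adjCl S hS.denseDom hS.closable ⟨u, hS.memA u hu⟩
      ⟨S.adjoint ⟨v, hS.memA v hv⟩, hS.memAC v hv⟩
  rw [h1, h2, ← inner_smul_right, ← inner_sub_right, hS.eqn v hv]

lemma L2R {q : ℝ} {S : H →ₗ.[ℂ] H} {D : Submodule ℂ H} (hS : SatOqD q S D)
    (u : H) (hu : u ∈ D) :
    ‖(S.closure ⟨u, hS.memC u hu⟩ : H)‖ ^ 2
      - q * ‖(S.adjoint ⟨u, hS.memA u hu⟩ : H)‖ ^ 2 = ‖u‖ ^ 2 := by
  have h := L2 hS u hu u hu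
  rw [inner_self_eq_norm_sq_to_K, inner_self_eq_norm_sq_to_K, inner_self_eq_norm_sq_to_K] at h
  have h2 : ((‖(S.closure ⟨u, hS.memC u hu⟩ : H)‖ ^ 2
      - q * ‖(S.adjoint ⟨u, hS.memA u hu⟩ : H)‖ ^ 2 : ℝ) : ℂ) = ((‖u‖ ^ 2 : ℝ) : ℂ) := by
    push_cast
    exact h
  exact_mod_cast h2

omit [CompleteSpace H] in
lemma seqApprox (S : H →ₗ.[ℂ] H) (D : Submodule ℂ H) (hcore : IsCoreOf S D)
    (hc : S.IsClosable) (f : H) (hf : f ∈ S.closure.domain) :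
    ∃ u : ℕ → S.domain, (∀ n, (u n : H) ∈ D) ∧
      Tendsto (fun n => (u n : H)) atTop (𝓝 f) ∧
      Tendsto (fun n => S (u n)) atTop (𝓝 (S.closure ⟨f, hf⟩)) := by
  set R := S.domRestrict D with hR
  have hRc : R.IsClosable := hc.leIsClosable S.domRestrict_le
  set c := (S.closure ⟨f, hf⟩ : H) with hcdef
  have hgr : (f, c) ∈ closure (R.graph : Set (H × H)) := by
    have h1 : (f, c) ∈ S.closure.graph := S.closure.mem_graph ⟨f, hf⟩
    have h2 : (f, c) ∈ R.closure.graph := by rw [hcore.2]; exact h1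
    rw [← hRc.graph_closure_eq_closure_graph] at h2
    rw [← Submodule.topologicalClosure_coe]; exact h2
  rcases mem_closure_iff_seq_limit.1 hgr with ⟨p, hp1, hp2⟩
  choose z hz1 hz2 using fun n => R.mem_graph_iff.1 (hp1 n)
  have hm : ∀ n, (z n : H) ∈ D ⊓ S.domain := fun n => (z n).2
  refine ⟨fun n => ⟨(z n : H), (hm n).2⟩, fun n => (hm n).1, ?_, ?_⟩
  · have t1 : Tendsto (fun n => (p n).1) atTop (𝓝 f) :=
      (continuous_fst.tendsto _).comp hp2
    convert t1 using 2 with n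
    exact hz1 n
  · have t2 : Tendsto (fun n => (p n).2) atTop (𝓝 c) :=
      (continuous_snd.tendsto _).comp hp2
    have he : ∀ n, S (⟨(z n : H), (hm n).2⟩ : S.domain) = (p n).2 := fun n => by
      rw [← hz2 n]
      exact (LinearPMap.domRestrict_apply rfl).symm
    convert t2 using 2 with n
    exact he n

lemma keyq {q : ℝ} {S : H →ₗ.[ℂ] H} {D : Submodule ℂ H} (hS : SatOqD q S D)
    (hcore : IsCoreOf S D) (hq : q ≠ 0) (f : H) (hf : f ∈ S.closure.domain) :
    ∃ hA : f ∈ S.adjoint.domain, ∃ u : ℕ → S.domain, ∃ hd : ∀ n, (u n : H) ∈ D,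
      Tendsto (fun n => (u n : H)) atTop (𝓝 f) ∧
      Tendsto (fun n => S (u n)) atTop (𝓝 (S.closure ⟨f, hf⟩)) ∧
      Tendsto (fun n => (S.adjoint ⟨(u n : H), hS.memA _ (hd n)⟩ : H)) atTop
        (𝓝 (S.adjoint ⟨f, hA⟩)) := by
  obtain ⟨u, hd, hu, hSu⟩ := seqApprox S D hcore hS.closable f hf
  set a : ℕ → H := fun n => (S.adjoint ⟨(u n : H), hS.memA _ (hd n)⟩ : H) with ha
  have hest : ∀ m n : ℕ, |q| * ‖a m - a n‖ ^ 2 ≤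
      ‖S (u m) - S (u n)‖ ^ 2 + ‖(u m : H) - (u n : H)‖ ^ 2 := by
    intro m n
    have hdm : (u m : H) - (u n : H) ∈ D := sub_mem (hd m) (hd n)
    have hid := L2R hS ((u m : H) - (u n : H)) hdm
    have eT : (S.closure ⟨(u m : H) - (u n : H), hS.memC _ hdm⟩ : H)
        = S (u m) - S (u n) := by
      have e1 : (⟨(u m : H) - (u n : H), hS.memC _ hdm⟩ : S.closure.domain)
          = ⟨(u m : H), hS.memC _ (hd m)⟩ - ⟨(u n : H), hS.memC _ (hd n)⟩ := rfl
      rw [e1, LinearPMap.map_sub]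
      have e2 : ∀ k : ℕ, (S.closure ⟨(u k : H), hS.memC _ (hd k)⟩ : H) = S (u k) :=
        fun k => (S.le_closure.2 rfl).symm
      rw [e2 m, e2 n]
    have eA : (S.adjoint ⟨(u m : H) - (u n : H), hS.memA _ hdm⟩ : H) = a m - a n := by
      have e1 : (⟨(u m : H) - (u n : H), hS.memA _ hdm⟩ : S.adjoint.domain)
          = ⟨(u m : H), hS.memA _ (hd m)⟩ - ⟨(u n : H), hS.memA _ (hd n)⟩ := rfl
      rw [e1, LinearPMap.map_sub]
    rw [eT, eA] at hid
    have h1 : (0:ℝ) ≤ ‖S (u m) - S (u n)‖ ^ 2 := sq_nonneg _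
    have h2 : (0:ℝ) ≤ ‖(u m : H) - (u n : H)‖ ^ 2 := sq_nonneg _
    rcases abs_cases q with ⟨hq1, _⟩ | ⟨hq1, _⟩ <;> nlinarith [hid]
  have hCau : CauchySeq a := by
    rw [Metric.cauchySeq_iff]
    intro ε hε
    have hδ : (0:ℝ) < Real.sqrt (|q| * ε ^ 2 / 2) := by
      apply Real.sqrt_pos.2
      have : (0:ℝ) < |q| := abs_pos.2 hq
      positivity
    set δ := Real.sqrt (|q| * ε ^ 2 / 2) with hδdef
    have hδsq : δ ^ 2 = |q| * ε ^ 2 / 2 := Real.sq_sqrt (by positivity)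
    obtain ⟨N₁, hN₁⟩ := Metric.cauchySeq_iff.1 hu.cauchySeq δ hδ
    obtain ⟨N₂, hN₂⟩ := Metric.cauchySeq_iff.1 hSu.cauchySeq δ hδ
    refine ⟨max N₁ N₂, fun m hm n hn => ?_⟩
    have b1 := hN₁ m (le_trans (le_max_left _ _) hm) n (le_trans (le_max_left _ _) hn)
    have b2 := hN₂ m (le_trans (le_max_right _ _) hm) n (le_trans (le_max_right _ _) hn)
    rw [dist_eq_norm] at b1 b2 ⊢
    have hest' := hest m n
    have hqpos : (0:ℝ) < |q| := abs_pos.2 hq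
    have hn1 : (0:ℝ) ≤ ‖(u m : H) - (u n : H)‖ := norm_nonneg _
    have hn2 : (0:ℝ) ≤ ‖S (u m) - S (u n)‖ := norm_nonneg _
    have hn3 : (0:ℝ) ≤ ‖a m - a n‖ := norm_nonneg _
    have key : ‖a m - a n‖ ^ 2 < ε ^ 2 := by nlinarith [hest', hδsq, b1, b2, hqpos, hn1, hn2]
    nlinarith [key, hn3, hε]
  obtain ⟨l, hl⟩ := cauchySeq_tendsto_of_complete hCau
  have hinner : ∀ x : S.domain, (inner ℂ l (x : H) : ℂ) = inner ℂ f (S x) := by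
    intro x
    have t1 : Tendsto (fun n => (inner ℂ (a n) (x : H) : ℂ)) atTop (𝓝 (inner ℂ l (x : H))) :=
      hl.inner tendsto_const_nhds
    have t2 : Tendsto (fun n => (inner ℂ (u n : H) (S x) : ℂ)) atTop (𝓝 (inner ℂ f (S x))) :=
      hu.inner tendsto_const_nhds
    have he : ∀ n, (inner ℂ (a n) (x : H) : ℂ) = inner ℂ (u n : H) (S x) := fun n =>
      LinearPMap.adjoint_isFormalAdjoint hS.denseDom ⟨(u n : H), hS.memA _ (hd n)⟩ x
    exact tendsto_nhds_unique (t1.congr he) t2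
  have hmem : f ∈ S.adjoint.domain :=
    LinearPMap.mem_adjoint_domain_of_exists f ⟨l, hinner⟩
  have happ : (S.adjoint ⟨f, hmem⟩ : H) = l :=
    LinearPMap.adjoint_apply_eq hS.denseDom ⟨f, hmem⟩ hinner
  exact ⟨hmem, u, hd, hu, hSu, by rw [happ]; exact hl⟩

/-- If `S` satisfies `(O_{q,D})` on a dense subspace `D` which is a core of
`S`, then `dom S̄ ⊆ dom S*`, `⟨S̄ f, S̄ g⟩ - q ⟨S* f, S* g⟩ = ⟨f, g⟩` for all
`f, g ∈ dom S̄`; in particular `S` satisfies `(O_{q,w})`. -/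
theorem stmt2 (q : ℝ) (S : H →ₗ.[ℂ] H) (D : Submodule ℂ H)
    (hS : SatOqD q S D) (hcore : IsCoreOf S D) :
    ∃ h : S.closure.domain ≤ S.adjoint.domain,
      (∀ f g (hf : f ∈ S.closure.domain) (hg : g ∈ S.closure.domain),
        (inner ℂ (S.closure ⟨f, hf⟩) (S.closure ⟨g, hg⟩) : ℂ)
          - (q : ℂ) * inner ℂ (S.adjoint ⟨f, h hf⟩) (S.adjoint ⟨g, h hg⟩) = inner ℂ f g)
      ∧ SatOqW q S := by
  have main : ∃ h : S.closure.domain ≤ S.adjoint.domain,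
      (∀ f g (hf : f ∈ S.closure.domain) (hg : g ∈ S.closure.domain),
        (inner ℂ (S.closure ⟨f, hf⟩) (S.closure ⟨g, hg⟩) : ℂ)
          - (q : ℂ) * inner ℂ (S.adjoint ⟨f, h hf⟩) (S.adjoint ⟨g, h hg⟩) = inner ℂ f g) := by
    by_cases hq : q = 0
    · subst hq
      have hiso : ∀ f (hf : f ∈ S.closure.domain), ‖(S.closure ⟨f, hf⟩ : H)‖ = ‖f‖ := by
        intro f hf
        obtain ⟨u, hd, hu, hSu⟩ := seqApprox S D hcore hS.closable f hf
        have hn : ∀ n, ‖S (u n)‖ = ‖(u n : H)‖ := by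
          intro n
          have hr := L2R hS (u n) (hd n)
          have e2 : (S.closure ⟨(u n : H), hS.memC _ (hd n)⟩ : H) = S (u n) :=
            (S.le_closure.2 rfl).symm
          rw [e2] at hr
          nlinarith [norm_nonneg (S (u n)), norm_nonneg ((u n : H)), hr]
        have t1 : Tendsto (fun n => ‖S (u n)‖) atTop (𝓝 ‖(S.closure ⟨f, hf⟩ : H)‖) :=
          hSu.norm
        have t2 : Tendsto (fun n => ‖(u n : H)‖) atTop (𝓝 ‖f‖) := hu.norm
        exact tendsto_nhds_unique ((t2.congr (fun n => (hn n).symm))) t1 |>.symm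
      have hdom : S.closure.domain ≤ S.adjoint.domain := by
        intro f hf
        rw [LinearPMap.mem_adjoint_domain_iff]
        apply AddMonoidHomClass.continuous_of_bound ((innerₛₗ ℂ f).comp S.toFun) ‖f‖
        intro x
        have hx : (x : H) ∈ S.closure.domain := S.le_closure.1 x.2
        have e : S x = S.closure ⟨(x : H), hx⟩ := S.le_closure.2 rfl
        calc ‖((innerₛₗ ℂ f).comp S.toFun) x‖ ≤ ‖f‖ * ‖S x‖ := norm_inner_le_norm f (S x)
          _ = ‖f‖ * ‖(x : H)‖ := by rw [e, hiso]
          _ = ‖f‖ * ‖x‖ := rfl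
      refine ⟨hdom, fun f g hf hg => ?_⟩
      push_cast
      rw [zero_mul, sub_zero]
      obtain ⟨u, hdu, hu, hSu⟩ := seqApprox S D hcore hS.closable f hf
      obtain ⟨v, hdv, hv, hSv⟩ := seqApprox S D hcore hS.closable g hg
      have hn : ∀ n, (inner ℂ (S (u n)) (S (v n)) : ℂ) = inner ℂ (u n : H) (v n : H) := by
        intro n
        have hl2 := L2 hS (u n) (hdu n) (v n) (hdv n)
        have e2 : (S.closure ⟨(u n : H), hS.memC _ (hdu n)⟩ : H) = S (u n) :=
          (S.le_closure.2 rfl).symm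
        have e3 : (S.closure ⟨(v n : H), hS.memC _ (hdv n)⟩ : H) = S (v n) :=
          (S.le_closure.2 rfl).symm
        rw [e2, e3] at hl2
        push_cast at hl2
        rw [zero_mul, sub_zero] at hl2
        exact hl2
      have t1 : Tendsto (fun n => (inner ℂ (S (u n)) (S (v n)) : ℂ)) atTop
          (𝓝 (inner ℂ (S.closure ⟨f, hf⟩ : H) (S.closure ⟨g, hg⟩ : H))) := hSu.inner hSv
      have t2 : Tendsto (fun n => (inner ℂ (u n : H) (v n : H) : ℂ)) atTop
          (𝓝 (inner ℂ f g)) := hu.inner hv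
      exact tendsto_nhds_unique (t1.congr hn) t2
    · have hdom : S.closure.domain ≤ S.adjoint.domain := fun f hf =>
        (keyq hS hcore hq f hf).choose
      refine ⟨hdom, fun f g hf hg => ?_⟩
      obtain ⟨hAf, u, hdu, hu, hSu, hAu⟩ := keyq hS hcore hq f hf
      obtain ⟨hAg, v, hdv, hv, hSv, hAv⟩ := keyq hS hcore hq g hg
      have hn : ∀ n, (inner ℂ (S (u n)) (S (v n)) : ℂ)
          - (q : ℂ) * inner ℂ (S.adjoint ⟨(u n : H), hS.memA _ (hdu n)⟩ : H)
              (S.adjoint ⟨(v n : H), hS.memA _ (hdv n)⟩ : H)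
          = inner ℂ (u n : H) (v n : H) := by
        intro n
        have hl2 := L2 hS (u n) (hdu n) (v n) (hdv n)
        have e2 : (S.closure ⟨(u n : H), hS.memC _ (hdu n)⟩ : H) = S (u n) :=
          (S.le_closure.2 rfl).symm
        have e3 : (S.closure ⟨(v n : H), hS.memC _ (hdv n)⟩ : H) = S (v n) :=
          (S.le_closure.2 rfl).symm
        rw [e2, e3] at hl2
        exact hl2
      have t1 : Tendsto (fun n => (inner ℂ (S (u n)) (S (v n)) : ℂ)
            - (q : ℂ) * inner ℂ (S.adjoint ⟨(u n : H), hS.memA _ (hdu n)⟩ : H)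
              (S.adjoint ⟨(v n : H), hS.memA _ (hdv n)⟩ : H)) atTop
          (𝓝 ((inner ℂ (S.closure ⟨f, hf⟩ : H) (S.closure ⟨g, hg⟩ : H) : ℂ)
            - (q : ℂ) * inner ℂ (S.adjoint ⟨f, hAf⟩ : H) (S.adjoint ⟨g, hAg⟩ : H))) :=
        (hSu.inner hSv).sub ((hAu.inner hAv).const_mul _)
      have t2 : Tendsto (fun n => (inner ℂ (u n : H) (v n : H) : ℂ)) atTop
          (𝓝 (inner ℂ f g)) := hu.inner hv
      have := tendsto_nhds_unique (t1.congr hn) t2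
      convert this using 3
  obtain ⟨hdom, hid⟩ := main
  refine ⟨hdom, hid, ?_⟩
  intro f g hf hf' hg hg'
  have hfT : f ∈ S.closure.domain := S.le_closure.1 hf
  have hgT : g ∈ S.closure.domain := S.le_closure.1 hg
  have h := hid f g hfT hgT
  have e1 : (S.closure ⟨f, hfT⟩ : H) = S ⟨f, hf⟩ := (S.le_closure.2 rfl).symm
  have e2 : (S.closure ⟨g, hgT⟩ : H) = S ⟨g, hg⟩ := (S.le_closure.2 rfl).symm
  rw [e1, e2] at h
  exact h
end
end

section
/- Let q ∈ ℝ and let S be a densely defined operator in a complex Hilbert space H satisfying (O_{q,D}) on a dense subspace D. (a) If 0 ≤ q < 1, then ‖S* f‖ ≤ ‖S f‖ for all f ∈ D (i.e. the restriction S|_D is hyponormal) if and only if ‖S f‖ ≤ (1 − q)^{−1/2} ‖f‖ for all f ∈ D. (b) If q < 0, then ‖S f‖ ≤ ‖S* f‖ for all f ∈ D if and only if ‖S f‖ ≤ (1 − q)^{−1/2} ‖f‖ for all f ∈ D. -/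
noncomputable section

open scoped InnerProductSpace

variable {H : Type*} [NormedAddCommGroup H] [InnerProductSpace ℂ H] [CompleteSpace H]


/-- Formal adjoint relation between `S.adjoint` and `S.closure`. -/
lemma closure_fa (S : H →ₗ.[ℂ] H) (hd : Dense (S.domain : Set H)) (hc : S.IsClosable)
    (y : S.adjoint.domain) (x : S.closure.domain) :
    ⟪(S.adjoint y : H), (x : H)⟫_ℂ = ⟪(y : H), S.closure x⟫_ℂ := by
  have hgr : ((x : H), S.closure x) ∈ S.closure.graph := S.closure.mem_graph x
  rw [← hc.graph_closure_eq_closure_graph] at hgr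
  have hclosed : IsClosed {p : H × H | ⟪(S.adjoint y : H), p.1⟫_ℂ = ⟪(y : H), p.2⟫_ℂ} := by
    apply isClosed_eq
    · exact (innerSL ℂ (S.adjoint y : H)).continuous.comp continuous_fst
    · exact (innerSL ℂ (y : H)).continuous.comp continuous_snd
  have hsub : (S.graph : Set (H × H)) ⊆
      {p : H × H | ⟪(S.adjoint y : H), p.1⟫_ℂ = ⟪(y : H), p.2⟫_ℂ} := by
    rintro p hp
    rw [SetLike.mem_coe, LinearPMap.mem_graph_iff] at hp
    obtain ⟨u, h1, h2⟩ := hp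
    have := S.adjoint_isFormalAdjoint hd y u
    simp only [Set.mem_setOf_eq, ← h1, ← h2]
    exact this
  have hmem : ((x : H), S.closure x) ∈ closure (S.graph : Set (H × H)) := by
    rwa [← Submodule.topologicalClosure_coe] at *
  exact closure_minimal hsub hclosed hmem

/-- Density bound: if `|⟪b, g⟫| ≤ c‖g‖` on a dense set, then `‖b‖ ≤ c`. -/
lemma norm_le_of_dense {D : Submodule ℂ H} (hD : Dense (D : Set H)) (b : H) (c : ℝ)
    (hc : 0 ≤ c) (h : ∀ g ∈ D, ‖(⟪b, g⟫_ℂ)‖ ≤ c * ‖g‖) : ‖b‖ ≤ c := by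
  have hall : ∀ g : H, ‖(⟪b, g⟫_ℂ)‖ ≤ c * ‖g‖ := by
    intro g
    have hcl : IsClosed {g : H | ‖(⟪b, g⟫_ℂ)‖ ≤ c * ‖g‖} := by
      apply isClosed_le
      · exact ((innerSL ℂ b).continuous).norm
      · exact continuous_const.mul continuous_norm
    exact closure_minimal h hcl (hD g)
  have hb := hall b
  rw [inner_self_eq_norm_sq_to_K] at hb
  simp only [norm_pow, RCLike.norm_ofReal, Complex.norm_real, abs_norm, norm_norm] at hb
  rcases eq_or_lt_of_le (norm_nonneg b) with h0 | h0
  · rw [← h0]; exact hc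
  · nlinarith

lemma le_of_sq_le_sq' {a b : ℝ} (ha : 0 ≤ a) (hb : 0 ≤ b) (h : a ^ 2 ≤ b ^ 2) : a ≤ b := by
  have := Real.sqrt_le_sqrt h
  rwa [Real.sqrt_sq ha, Real.sqrt_sq hb] at this

lemma sqrt_ineq {q A F : ℝ} (hq : q < 1) (hA : 0 ≤ A) (hF : 0 ≤ F) :
    A ≤ (Real.sqrt (1 - q))⁻¹ * F ↔ (1 - q) * A ^ 2 ≤ F ^ 2 := by
  have h1 : (0:ℝ) < 1 - q := by linarith
  have hs : 0 < Real.sqrt (1 - q) := Real.sqrt_pos.mpr h1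
  have hs2 : Real.sqrt (1 - q) ^ 2 = 1 - q := Real.sq_sqrt h1.le
  rw [inv_mul_eq_div, le_div_iff₀ hs]
  constructor
  · intro h
    nlinarith [mul_self_le_mul_self (by positivity : (0:ℝ) ≤ A * Real.sqrt (1 - q)) h]
  · intro h
    have h2 := Real.sqrt_le_sqrt h
    rw [Real.sqrt_mul h1.le, Real.sqrt_sq hA, Real.sqrt_sq hF] at h2
    linarith [h2]

lemma key_identity (q : ℝ) (S : H →ₗ.[ℂ] H) (D : Submodule ℂ H) (hS : SatOqD q S D)
    (f : H) (hf : f ∈ D) :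
    ‖(S.closure ⟨f, hS.memC f hf⟩ : H)‖ ^ 2
      - q * ‖(S.adjoint ⟨f, hS.memA f hf⟩ : H)‖ ^ 2 = ‖f‖ ^ 2 := by
  have e := hS.eqn f hf
  have h1 := congrArg (fun z : H => (⟪z, f⟫_ℂ)) e
  simp only [inner_sub_left, inner_smul_left] at h1
  have hA : ⟪(S.adjoint ⟨S.closure ⟨f, hS.memC f hf⟩, hS.memCA f hf⟩ : H), f⟫_ℂ
      = ((‖(S.closure ⟨f, hS.memC f hf⟩ : H)‖ : ℂ)) ^ 2 := by
    exact (closure_fa S hS.denseDom hS.closable ⟨_, hS.memCA f hf⟩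
      ⟨f, hS.memC f hf⟩).trans (inner_self_eq_norm_sq_to_K _)
  have hB : ⟪(S.closure ⟨S.adjoint ⟨f, hS.memA f hf⟩, hS.memAC f hf⟩ : H), f⟫_ℂ
      = ((‖(S.adjoint ⟨f, hS.memA f hf⟩ : H)‖ : ℂ)) ^ 2 := by
    rw [← inner_conj_symm]
    have h2 := closure_fa S hS.denseDom hS.closable ⟨f, hS.memA f hf⟩
      ⟨(S.adjoint ⟨f, hS.memA f hf⟩ : H), hS.memAC f hf⟩
    rw [← h2, inner_self_eq_norm_sq_to_K]
    simp [← Complex.ofReal_pow]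
  rw [hA, hB, inner_self_eq_norm_sq_to_K, Complex.conj_ofReal] at h1
  exact Complex.ofReal_inj.mp (by push_cast; exact h1)

/-- Let `S` satisfy `(O_{q,D})` on a dense subspace `D`.
(a) If `0 ≤ q < 1`, then `‖S* f‖ ≤ ‖S f‖` on `D` iff `‖S f‖ ≤ (1-q)^{-1/2} ‖f‖` on `D`.
(b) If `q < 0`, then `‖S f‖ ≤ ‖S* f‖` on `D` iff `‖S f‖ ≤ (1-q)^{-1/2} ‖f‖` on `D`. -/
theorem stmt3 (q : ℝ) (S : H →ₗ.[ℂ] H) (D : Submodule ℂ H) (hS : SatOqD q S D) :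
    ((0 ≤ q ∧ q < 1) →
      ((∀ f (hf : f ∈ D),
          ‖(S.adjoint ⟨f, hS.memA f hf⟩ : H)‖ ≤ ‖(S.closure ⟨f, hS.memC f hf⟩ : H)‖) ↔
        (∀ f (hf : f ∈ D),
          ‖(S.closure ⟨f, hS.memC f hf⟩ : H)‖ ≤ (Real.sqrt (1 - q))⁻¹ * ‖f‖))) ∧
    (q < 0 →
      ((∀ f (hf : f ∈ D),
          ‖(S.closure ⟨f, hS.memC f hf⟩ : H)‖ ≤ ‖(S.adjoint ⟨f, hS.memA f hf⟩ : H)‖) ↔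
        (∀ f (hf : f ∈ D),
          ‖(S.closure ⟨f, hS.memC f hf⟩ : H)‖ ≤ (Real.sqrt (1 - q))⁻¹ * ‖f‖))) := by
  set A := fun (f : H) (hf : f ∈ D) => ‖(S.closure ⟨f, hS.memC f hf⟩ : H)‖ with hAdef
  set B := fun (f : H) (hf : f ∈ D) => ‖(S.adjoint ⟨f, hS.memA f hf⟩ : H)‖ with hBdef
  have key : ∀ f (hf : f ∈ D), A f hf ^ 2 - q * B f hf ^ 2 = ‖f‖ ^ 2 :=
    fun f hf => key_identity q S D hS f hf
  have hApos : ∀ f (hf : f ∈ D), 0 ≤ A f hf := fun f hf => norm_nonneg _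
  have hBpos : ∀ f (hf : f ∈ D), 0 ≤ B f hf := fun f hf => norm_nonneg _
  constructor
  · rintro ⟨hq0, hq1⟩
    constructor
    · intro h f hf
      rw [sqrt_ineq hq1 (hApos f hf) (norm_nonneg f)]
      have hBA := h f hf
      nlinarith [key f hf, mul_self_le_mul_self (hBpos f hf) hBA, hApos f hf, hBpos f hf]
    · intro h f hf
      rcases eq_or_lt_of_le hq0 with h0 | h0
      · -- q = 0 : use the density argument
        subst h0
        have hAF : ∀ g (hg : g ∈ D), A g hg = ‖g‖ := by
          intro g hg
          have k := key g hg
          exact le_antisymm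
            (le_of_sq_le_sq' (hApos g hg) (norm_nonneg g) (by nlinarith))
            (le_of_sq_le_sq' (norm_nonneg g) (hApos g hg) (by nlinarith))
        show B f hf ≤ A f hf
        rw [hAF f hf]
        refine norm_le_of_dense hS.denseD _ _ (norm_nonneg f) ?_
        intro g hg
        have e1 : ⟪(S.adjoint ⟨f, hS.memA f hf⟩ : H), g⟫_ℂ
            = ⟪f, (S.closure ⟨g, hS.memC g hg⟩ : H)⟫_ℂ :=
          closure_fa S hS.denseDom hS.closable ⟨f, hS.memA f hf⟩ ⟨g, hS.memC g hg⟩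
        calc ‖⟪(S.adjoint ⟨f, hS.memA f hf⟩ : H), g⟫_ℂ‖
            = ‖⟪f, (S.closure ⟨g, hS.memC g hg⟩ : H)⟫_ℂ‖ := by rw [e1]
          _ ≤ ‖f‖ * ‖(S.closure ⟨g, hS.memC g hg⟩ : H)‖ := norm_inner_le_norm _ _
          _ = ‖f‖ * ‖g‖ := by rw [show ‖(S.closure ⟨g, hS.memC g hg⟩ : H)‖ = A g hg from rfl,
              hAF g hg]
      · -- q > 0
        have hF := h f hf
        rw [sqrt_ineq hq1 (hApos f hf) (norm_nonneg f)] at hF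
        refine le_of_sq_le_sq' (hBpos f hf) (hApos f hf) ?_
        have k := key f hf
        nlinarith [hApos f hf, hBpos f hf]
  · intro hq
    constructor
    · intro h f hf
      rw [sqrt_ineq (by linarith) (hApos f hf) (norm_nonneg f)]
      have hAB := h f hf
      nlinarith [key f hf, mul_self_le_mul_self (hApos f hf) hAB, hApos f hf, hBpos f hf]
    · intro h f hf
      have hF := h f hf
      rw [sqrt_ineq (by linarith) (hApos f hf) (norm_nonneg f)] at hF
      refine le_of_sq_le_sq' (hApos f hf) (hBpos f hf) ?_
      have k := key f hf
      nlinarith [hApos f hf, hBpos f hf]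
end
end

section
/- Let q ∈ ℝ and let S be a densely defined operator in a nonzero complex Hilbert space H satisfying (O_{q,D}) on a dense subspace D, and suppose ‖S f‖ = ‖S* f‖ for all f ∈ D (the restriction S|_D is formally normal). Then necessarily q < 1, and ‖S f‖ = (1 − q)^{−1/2} ‖f‖ and ‖S* f‖ = (1 − q)^{−1/2} ‖f‖ for all f ∈ D. In particular, for q ≥ 1 there is no formally normal solution of (O_{q,D}). -/
open scoped ComplexInnerProductSpace

noncomputable section

variable {H : Type*} [NormedAddCommGroup H] [InnerProductSpace ℂ H] [CompleteSpace H]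

/-- The adjoint is also a formal adjoint of the closure. -/
lemma adjoint_inner_closure (S : H →ₗ.[ℂ] H) (hd : Dense (S.domain : Set H))
    (hc : S.IsClosable) (y : S.adjoint.domain) (x : S.closure.domain) :
    ⟪(S.adjoint y : H), (x : H)⟫ = ⟪(y : H), (S.closure x : H)⟫ := by
  have hCclosed : IsClosed {p : H × H | ⟪(S.adjoint y : H), p.1⟫ = ⟪(y : H), p.2⟫} := by
    apply isClosed_eq
    · exact (continuous_const.inner continuous_fst)
    · exact (continuous_const.inner continuous_snd)
  have hsub : (S.graph : Set (H × H)) ⊆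
      {p : H × H | ⟪(S.adjoint y : H), p.1⟫ = ⟪(y : H), p.2⟫} := by
    rintro ⟨a, b⟩ hab
    have hab' : (a, b) ∈ S.graph := hab
    rw [LinearPMap.mem_graph_iff] at hab'
    rename' hab' => hab
    obtain ⟨z, hz1, hz2⟩ := hab
    simp only [] at hz1 hz2
    show inner ℂ ((S.adjoint y : H)) a = inner ℂ ((y : H)) b
    rw [show a = (z : H) from hz1.symm, show b = S z from hz2.symm]
    exact LinearPMap.adjoint_isFormalAdjoint hd y z
  have hmem : ((x : H), (S.closure x : H)) ∈ S.closure.graph := S.closure.mem_graph x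
  rw [← hc.graph_closure_eq_closure_graph] at hmem
  have hmem' : ((x : H), (S.closure x : H)) ∈ closure (S.graph : Set (H × H)) := hmem
  exact closure_minimal hsub hCclosed hmem'

lemma SatOqD.key {q : ℝ} {S : H →ₗ.[ℂ] H} {D : Submodule ℂ H} (hS : SatOqD q S D)
    (f : H) (hf : f ∈ D) :
    ‖(S.closure ⟨f, hS.memC f hf⟩ : H)‖ ^ 2
      - q * ‖(S.adjoint ⟨f, hS.memA f hf⟩ : H)‖ ^ 2 = ‖f‖ ^ 2 := by
  set u : H := (S.closure ⟨f, hS.memC f hf⟩ : H) with hu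
  set v : H := (S.adjoint ⟨f, hS.memA f hf⟩ : H) with hv
  have h1 : ⟪(S.adjoint ⟨u, hS.memCA f hf⟩ : H), f⟫ = ⟪u, u⟫ :=
    adjoint_inner_closure S hS.denseDom hS.closable ⟨u, hS.memCA f hf⟩ ⟨f, hS.memC f hf⟩
  have h2 : ⟪v, v⟫ = ⟪f, (S.closure ⟨v, hS.memAC f hf⟩ : H)⟫ :=
    adjoint_inner_closure S hS.denseDom hS.closable ⟨f, hS.memA f hf⟩ ⟨v, hS.memAC f hf⟩
  have heqn := hS.eqn f hf
  have hinner : ⟪(S.adjoint ⟨u, hS.memCA f hf⟩ : H)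
      - (q : ℂ) • (S.closure ⟨v, hS.memAC f hf⟩ : H), f⟫ = ⟪(f : H), f⟫ := by
    rw [heqn]
  rw [inner_sub_left, inner_smul_left, h1] at hinner
  have h3 : ⟪(S.closure ⟨v, hS.memAC f hf⟩ : H), f⟫ = (starRingEnd ℂ) ⟪v, v⟫ := by
    rw [h2, inner_conj_symm]
  rw [h3] at hinner
  have hvv : ⟪v, v⟫ = ((‖v‖ : ℂ)) ^ 2 := inner_self_eq_norm_sq_to_K v
  have huu : ⟪u, u⟫ = ((‖u‖ : ℂ)) ^ 2 := inner_self_eq_norm_sq_to_K u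
  have hff : ⟪(f : H), f⟫ = ((‖f‖ : ℂ)) ^ 2 := inner_self_eq_norm_sq_to_K f
  rw [hvv, huu, hff] at hinner
  have : ((‖u‖ ^ 2 - q * ‖v‖ ^ 2 : ℝ) : ℂ) = ((‖f‖ ^ 2 : ℝ) : ℂ) := by
    push_cast
    simpa [Complex.conj_ofReal, map_pow, map_mul] using hinner
  exact_mod_cast this


/-- If `S` satisfies `(O_{q,D})` on a dense subspace `D` of a nonzero
Hilbert space and `‖S f‖ = ‖S* f‖` on `D` (formal normality of `S|_D`), then `q < 1` and
`‖S f‖ = (1-q)^{-1/2} ‖f‖` and `‖S* f‖ = (1-q)^{-1/2} ‖f‖` on `D`. -/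
theorem stmt5 (q : ℝ) [Nontrivial H] (S : H →ₗ.[ℂ] H) (D : Submodule ℂ H)
    (hS : SatOqD q S D)
    (hfn : ∀ f (hf : f ∈ D),
      ‖(S.closure ⟨f, hS.memC f hf⟩ : H)‖ = ‖(S.adjoint ⟨f, hS.memA f hf⟩ : H)‖) :
    q < 1 ∧
      (∀ f (hf : f ∈ D),
        ‖(S.closure ⟨f, hS.memC f hf⟩ : H)‖ = (Real.sqrt (1 - q))⁻¹ * ‖f‖) ∧
      (∀ f (hf : f ∈ D),
        ‖(S.adjoint ⟨f, hS.memA f hf⟩ : H)‖ = (Real.sqrt (1 - q))⁻¹ * ‖f‖) := by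
  have key := fun f hf => hS.key f hf
  -- simplify key using hfn
  have key' : ∀ f (hf : f ∈ D),
      (1 - q) * ‖(S.closure ⟨f, hS.memC f hf⟩ : H)‖ ^ 2 = ‖f‖ ^ 2 := by
    intro f hf
    have := key f hf
    rw [← hfn f hf] at this
    linarith
  -- find a nonzero element of D
  obtain ⟨f₀, hf₀D, hf₀⟩ : ∃ f₀, f₀ ∈ D ∧ f₀ ≠ 0 := by
    by_contra h
    push_neg at h
    have hsub : (D : Set H) ⊆ {0} := by
      intro x hx
      exact h x hx
    obtain ⟨x, hx⟩ := exists_ne (0 : H)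
    have : x ∈ closure (D : Set H) := hS.denseD x
    have : x ∈ closure ({0} : Set H) := closure_mono hsub this
    rw [closure_singleton] at this
    exact hx this
  have hq : q < 1 := by
    have h0 := key' f₀ hf₀D
    have hfpos : 0 < ‖f₀‖ ^ 2 := pow_pos (norm_pos_iff.mpr hf₀) 2
    by_contra h
    push_neg at h
    nlinarith [sq_nonneg ‖(S.closure ⟨f₀, hS.memC f₀ hf₀D⟩ : H)‖]
  have h1q : 0 < 1 - q := by linarith
  have hC : ∀ f (hf : f ∈ D),
      ‖(S.closure ⟨f, hS.memC f hf⟩ : H)‖ = (Real.sqrt (1 - q))⁻¹ * ‖f‖ := by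
    intro f hf
    have hk := key' f hf
    have hsq : ((Real.sqrt (1 - q))⁻¹ * ‖f‖) ^ 2
        = ‖(S.closure ⟨f, hS.memC f hf⟩ : H)‖ ^ 2 := by
      rw [mul_pow, inv_pow, Real.sq_sqrt h1q.le]
      field_simp
      linarith
    have h1 : ‖(S.closure ⟨f, hS.memC f hf⟩ : H)‖
        = Real.sqrt (‖(S.closure ⟨f, hS.memC f hf⟩ : H)‖ ^ 2) :=
      (Real.sqrt_sq (norm_nonneg _)).symm
    rw [h1, ← hsq, Real.sqrt_sq (mul_nonneg (inv_nonneg.2 (Real.sqrt_nonneg _)) (norm_nonneg _))]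
  refine ⟨hq, hC, fun f hf => ?_⟩
  rw [← hfn f hf]
  exact hC f hf
end
end

section
/- Let q ∈ ℝ and let S be a densely defined operator satisfying (O_{q,D}) on a dense subspace D with S D ⊆ D and S* D ⊆ D, and let C be the operator C f := f + (q − 1) S S* f, f ∈ D. Then C D ⊆ D, and for all f ∈ D one has C S f = q S C f, q C S* f = S* C f, and S* S f − S S* f = C f. -/
noncomputable section

variable {H : Type*} [NormedAddCommGroup H] [InnerProductSpace ℂ H] [CompleteSpace H]

private lemma pmap_congr (S : H →ₗ.[ℂ] H) {x y : H} (hxy : x = y) (hx : x ∈ S.domain)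
    (hy : y ∈ S.domain) : (S ⟨x, hx⟩ : H) = S ⟨y, hy⟩ := by subst hxy; rfl

private lemma pmap_lin (S : H →ₗ.[ℂ] H) {x y : H} (c : ℂ) (hx : x ∈ S.domain)
    (hy : y ∈ S.domain) (h : x + c • y ∈ S.domain) :
    (S ⟨x + c • y, h⟩ : H) = S ⟨x, hx⟩ + c • S ⟨y, hy⟩ := by
  have h2 : (⟨x + c • y, h⟩ : S.domain) = ⟨x, hx⟩ + c • ⟨y, hy⟩ := rfl
  rw [h2, S.map_add, S.map_smul]

/-- If `S` satisfies `(O_{q,D})` on a dense subspace `D` invariant under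
both `S` and `S*`, and `C f := f + (q-1) S S* f` on `D`, then `C D ⊆ D` and on `D`:
`C S f = q S C f`, `q C S* f = S* C f`, and `S* S f - S S* f = C f`. -/
theorem stmt7 (q : ℝ) (S : H →ₗ.[ℂ] H) (D : Submodule ℂ H)
    (hdense : Dense (S.domain : Set H)) (hDdense : Dense (D : Set H))
    (hD : D ≤ S.domain) (hDA : D ≤ S.adjoint.domain)
    (hSD : ∀ f (hf : f ∈ D), (S ⟨f, hD hf⟩ : H) ∈ D)
    (hAD : ∀ f (hf : f ∈ D), (S.adjoint ⟨f, hDA hf⟩ : H) ∈ D)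
    (heqn : ∀ f (hf : f ∈ D),
      (S.adjoint ⟨S ⟨f, hD hf⟩, hDA (hSD f hf)⟩ : H)
        - (q : ℂ) • (S ⟨S.adjoint ⟨f, hDA hf⟩, hD (hAD f hf)⟩ : H) = f)
    (C : H → H)
    (hC : ∀ f (hf : f ∈ D),
      C f = f + ((q : ℂ) - 1) • (S ⟨S.adjoint ⟨f, hDA hf⟩, hD (hAD f hf)⟩ : H)) :
    ∃ hCD : ∀ f, f ∈ D → C f ∈ D,
      (∀ f (hf : f ∈ D),
        C (S ⟨f, hD hf⟩ : H) = (q : ℂ) • (S ⟨C f, hD (hCD f hf)⟩ : H)) ∧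
      (∀ f (hf : f ∈ D),
        (q : ℂ) • C (S.adjoint ⟨f, hDA hf⟩ : H)
          = (S.adjoint ⟨C f, hDA (hCD f hf)⟩ : H)) ∧
      (∀ f (hf : f ∈ D),
        (S.adjoint ⟨S ⟨f, hD hf⟩, hDA (hSD f hf)⟩ : H)
          - (S ⟨S.adjoint ⟨f, hDA hf⟩, hD (hAD f hf)⟩ : H) = C f) := by
  -- T f := S S* f ∈ D
  have hT : ∀ f (hf : f ∈ D),
      (S ⟨(S.adjoint ⟨f, hDA hf⟩ : H), hD (hAD f hf)⟩ : H) ∈ D :=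
    fun f hf => hSD _ (hAD f hf)
  have hCD : ∀ f, f ∈ D → C f ∈ D := by
    intro f hf
    rw [hC f hf]
    exact D.add_mem hf (D.smul_mem _ (hT f hf))
  refine ⟨hCD, ?_, ?_, ?_⟩
  · -- C S f = q S C f
    intro f hf
    set g : H := (S ⟨f, hD hf⟩ : H) with hgdef
    have hg : g ∈ D := hSD f hf
    rw [hC g hg]
    -- S* g = f + q • (S S* f)
    have h1 : (S.adjoint ⟨g, hDA hg⟩ : H)
        = f + (q : ℂ) • (S ⟨(S.adjoint ⟨f, hDA hf⟩ : H), hD (hAD f hf)⟩ : H) := by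
      have := heqn f hf
      rw [sub_eq_iff_eq_add] at this
      exact this
    have h2 : (S ⟨(S.adjoint ⟨g, hDA hg⟩ : H), hD (hAD g hg)⟩ : H)
        = g + (q : ℂ) • (S ⟨(S ⟨(S.adjoint ⟨f, hDA hf⟩ : H), hD (hAD f hf)⟩ : H),
            hD (hT f hf)⟩ : H) := by
      rw [pmap_congr S h1 (hD (hAD g hg))
        (by rw [← h1]; exact hD (hAD g hg)),
        pmap_lin S (q : ℂ) (hD hf) (hD (hT f hf))]
    have h3 : (S ⟨C f, hD (hCD f hf)⟩ : H)
        = g + ((q : ℂ) - 1) • (S ⟨(S ⟨(S.adjoint ⟨f, hDA hf⟩ : H), hD (hAD f hf)⟩ : H),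
            hD (hT f hf)⟩ : H) := by
      rw [pmap_congr S (hC f hf) (hD (hCD f hf))
        (by rw [← hC f hf]; exact hD (hCD f hf)),
        pmap_lin S ((q : ℂ) - 1) (hD hf) (hD (hT f hf))]
    rw [h2, h3]
    module
  · -- q C S* f = S* C f
    intro f hf
    set g : H := (S.adjoint ⟨f, hDA hf⟩ : H) with hgdef
    have hg : g ∈ D := hAD f hf
    rw [hC g hg]
    -- heqn at g : S* (S g) = g + q • S (S* g), and S g = T f
    have h1 : (S.adjoint ⟨(S ⟨g, hD hg⟩ : H), hDA (hSD g hg)⟩ : H)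
        = g + (q : ℂ) • (S ⟨(S.adjoint ⟨g, hDA hg⟩ : H), hD (hAD g hg)⟩ : H) := by
      have := heqn g hg
      rw [sub_eq_iff_eq_add] at this
      exact this
    have h3 : (S.adjoint ⟨C f, hDA (hCD f hf)⟩ : H)
        = g + ((q : ℂ) - 1) • (g + (q : ℂ) •
            (S ⟨(S.adjoint ⟨g, hDA hg⟩ : H), hD (hAD g hg)⟩ : H)) := by
      rw [pmap_congr S.adjoint (hC f hf) (hDA (hCD f hf))
        (by rw [← hC f hf]; exact hDA (hCD f hf)),
        pmap_lin S.adjoint ((q : ℂ) - 1) (hDA hf) (hDA (hT f hf)), ← h1]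
      -- done by rw
    rw [h3]
    module
  · -- S* S f - S S* f = C f
    intro f hf
    have h1 := heqn f hf
    rw [sub_eq_iff_eq_add] at h1
    rw [h1, hC f hf]
    module
end
end

section
/- Let q ∈ ℝ and let S be a densely defined operator satisfying (O_{q,D}) on a dense subspace D with S D ⊆ D and S* D ⊆ D, such that D is a core of S, and assume ⟨C f, f⟩ ≥ 0 for all f ∈ D, where C f := f + (q − 1) S S* f. Then for every p ∈ ℕ and all f_0, …, f_p ∈ D: Σ_{i,j=0}^{p} ⟨S^i f_j, S^j f_i⟩ ≥ 0. -/
noncomputable section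

variable {H : Type*} [NormedAddCommGroup H] [InnerProductSpace ℂ H] [CompleteSpace H]

namespace Stmt9Aux

/-- `[m]_q = 1 + q + ... + q^(m-1)` -/
def qnum (q : ℝ) (m : ℕ) : ℝ := ∑ t ∈ Finset.range m, q ^ t

/-- q-factorial -/
def qfact (q : ℝ) : ℕ → ℝ
  | 0 => 1
  | k+1 => qfact q k * qnum q (k+1)

/-- q-binomial coefficient -/
def qb (q : ℝ) : ℕ → ℕ → ℝ
  | 0, 0 => 1
  | 0, _+1 => 0
  | _+1, 0 => 1
  | i+1, k+1 => q^(k+1) * qb q i (k+1) + qb q i k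

/-- normal ordering coefficients -/
def Tc (q : ℝ) : ℕ → ℕ → ℕ → ℝ
  | 0, _, 0 => 1
  | 0, _, _+1 => 0
  | i+1, j, 0 => Tc q i j 0
  | i+1, j, k+1 => q^(k+1) * Tc q i j (k+1) + qnum q (j-k) * Tc q i j k

variable {q : ℝ}

theorem qnum_zero : qnum q 0 = 0 := by simp [qnum]

theorem qnum_one : qnum q 1 = 1 := by simp [qnum]

theorem qnum_succ (m : ℕ) : qnum q (m+1) = qnum q m + q ^ m :=
  Finset.sum_range_succ _ _

theorem qnum_succ' (m : ℕ) : qnum q (m+1) = 1 + q * qnum q m := by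
  simp only [qnum, Finset.mul_sum]
  rw [Finset.sum_range_succ' (fun t => q ^ t)]
  simp [add_comm, pow_succ, mul_comm]

theorem qnum_nonneg (hq : 0 ≤ q) (m : ℕ) : 0 ≤ qnum q m :=
  Finset.sum_nonneg fun t _ => pow_nonneg hq t

theorem qfact_nonneg (hq : 0 ≤ q) (k : ℕ) : 0 ≤ qfact q k := by
  induction k with
  | zero => norm_num [qfact]
  | succ k ih => exact mul_nonneg ih (qnum_nonneg hq _)

theorem qb_zero_right (i : ℕ) : qb q i 0 = 1 := by
  cases i <;> rfl

theorem qb_eq_zero : ∀ i k : ℕ, i < k → qb q i k = 0 := by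
  intro i
  induction i with
  | zero => intro k hk; rcases k with _|k; · omega
            rfl
  | succ i ih =>
      intro k hk
      rcases k with _|k
      · omega
      · show q^(k+1) * qb q i (k+1) + qb q i k = 0
        rw [ih (k+1) (by omega), ih k (by omega)]
        ring

theorem qb_id : ∀ j k : ℕ, qnum q (k+1) * qb q j (k+1) = qnum q (j - k) * qb q j k := by
  intro j
  induction j with
  | zero =>
      intro k
      rcases k with _|k
      · simp [qb, qnum_zero, qnum_one]
      · simp [qb, qnum_zero, qb_eq_zero 0 (k+1) (by omega)]
  | succ j ih =>
      intro k
      rcases k with _|k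
      · -- qnum q 1 * qb (j+1) 1 = qnum q (j+1) * qb (j+1) 0
        show qnum q 1 * (q^(0+1) * qb q j (0+1) + qb q j 0) = qnum q (j+1-0) * qb q (j+1) 0
        rw [qnum_one, qb_zero_right, qb_zero_right, one_mul, mul_one]
        have := ih 0
        rw [qnum_one, one_mul, qb_zero_right, mul_one, Nat.sub_zero] at this
        rw [this, Nat.sub_zero, qnum_succ' j]
        ring
      · by_cases hkj : j < k + 1
        · -- degenerate: everything zero
          rw [qb_eq_zero (j+1) (k+2) (by omega)]
          have h2 : j + 1 - (k+1) = 0 := by omega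
          rcases Nat.lt_or_ge j (k+1) with h | h
          · rw [h2, qnum_zero]; ring
          · omega
        · push_neg at hkj
          show qnum q (k+2) * (q^(k+2) * qb q j (k+2) + qb q j (k+1))
              = qnum q (j+1-(k+1)) * (q^(k+1) * qb q j (k+1) + qb q j k)
          have h1 := ih (k+1)  -- qnum (k+2) * qb j (k+2) = qnum (j-(k+1)) * qb j (k+1)
          have h2 := ih k      -- qnum (k+1) * qb j (k+1) = qnum (j-k) * qb j k
          have e1 : j + 1 - (k+1) = (j - (k+1)) + 1 := by omega
          have e2 : j - k = (j - (k+1)) + 1 := by omega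
          rw [e2] at h2
          rw [e1]
          calc qnum q (k+2) * (q^(k+2) * qb q j (k+2) + qb q j (k+1))
              = q^(k+2) * (qnum q (k+2) * qb q j (k+2)) + qnum q (k+2) * qb q j (k+1) := by ring
            _ = q^(k+2) * (qnum q (j-(k+1)) * qb q j (k+1)) + qnum q (k+2) * qb q j (k+1) := by rw [h1]
            _ = (q^(k+2) * qnum q (j-(k+1)) + qnum q (k+2)) * qb q j (k+1) := by ring
            _ = (qnum q ((j-(k+1))+1) * q^(k+1) + qnum q (k+1)) * qb q j (k+1) := by
                  rw [qnum_succ' (j-(k+1)), qnum_succ (k+1)]; ring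
            _ = qnum q ((j-(k+1))+1) * (q^(k+1) * qb q j (k+1)) + qnum q (k+1) * qb q j (k+1) := by ring
            _ = qnum q ((j-(k+1))+1) * (q^(k+1) * qb q j (k+1)) + qnum q ((j-(k+1))+1) * qb q j k := by rw [h2]
            _ = qnum q ((j-(k+1))+1) * (q^(k+1) * qb q j (k+1) + qb q j k) := by ring

theorem Tc_eq : ∀ i j k : ℕ, Tc q i j k = qfact q k * qb q i k * qb q j k := by
  intro i
  induction i with
  | zero =>
      intro j k
      rcases k with _|k
      · simp [Tc, qfact, qb_zero_right]
      · simp [Tc, qb]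
  | succ i ih =>
      intro j k
      rcases k with _|k
      · show Tc q i j 0 = qfact q 0 * qb q (i+1) 0 * qb q j 0
        rw [ih j 0]; simp [qb_zero_right]
      · show q^(k+1) * Tc q i j (k+1) + qnum q (j-k) * Tc q i j k
            = qfact q (k+1) * qb q (i+1) (k+1) * qb q j (k+1)
        rw [ih j (k+1), ih j k]
        show _ = qfact q (k+1) * (q^(k+1) * qb q i (k+1) + qb q i k) * qb q j (k+1)
        have h := qb_id (q := q) j k
        have hf : qfact q (k+1) = qfact q k * qnum q (k+1) := rfl
        calc q^(k+1) * (qfact q (k+1) * qb q i (k+1) * qb q j (k+1))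
              + qnum q (j-k) * (qfact q k * qb q i k * qb q j k)
            = q^(k+1) * (qfact q (k+1) * qb q i (k+1) * qb q j (k+1))
              + qfact q k * qb q i k * (qnum q (j-k) * qb q j k) := by ring
          _ = q^(k+1) * (qfact q (k+1) * qb q i (k+1) * qb q j (k+1))
              + qfact q k * qb q i k * (qnum q (k+1) * qb q j (k+1)) := by rw [h]
          _ = qfact q (k+1) * (q^(k+1) * qb q i (k+1) + qb q i k) * qb q j (k+1) := by
                rw [hf]; ring

theorem Tc_eq_zero {i k : ℕ} (j : ℕ) (h : i < k) : Tc q i j k = 0 := by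
  rw [Tc_eq, qb_eq_zero i k h]; ring

end Stmt9Aux

section Abstract

variable {E : Type*} [NormedAddCommGroup E] [InnerProductSpace ℂ E]

open Stmt9Aux

local notation "⟪" x ", " y "⟫" => (inner ℂ x y : ℂ)

theorem stmt9_abstract (q : ℝ) (s a : Module.End ℂ E)
    (hadj : ∀ x y : E, ⟪s x, y⟫ = ⟪x, a y⟫)
    (heqn : ∀ f : E, a (s f) - (q : ℂ) • s (a f) = f)
    (hpos : ∀ f : E, 0 ≤ (⟪f + ((q:ℂ)-1) • s (a f), f⟫).re ∧
      (⟪f + ((q:ℂ)-1) • s (a f), f⟫).im = 0) :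
    ∀ (p : ℕ) (f : ℕ → E),
      0 ≤ (∑ i ∈ Finset.range (p + 1), ∑ j ∈ Finset.range (p + 1),
            ⟪(s ^ i) (f j), (s ^ j) (f i)⟫).re ∧
      (∑ i ∈ Finset.range (p + 1), ∑ j ∈ Finset.range (p + 1),
            ⟪(s ^ i) (f j), (s ^ j) (f i)⟫).im = 0 := by
  have hadj' : ∀ x y : E, ⟪x, s y⟫ = ⟪a x, y⟫ := by
    intro x y
    rw [← inner_conj_symm, hadj, inner_conj_symm]
  -- operator identities
  have hE : a * s = (q:ℂ) • (s * a) + 1 := by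
    ext f
    have h := heqn f
    rw [sub_eq_iff_eq_add] at h
    simp only [LinearMap.add_apply, LinearMap.smul_apply, Module.End.mul_apply,
      Module.End.one_apply]
    rw [h]; abel
  set C : Module.End ℂ E := 1 + ((q:ℂ)-1) • (s * a) with hCdef
  have hCapp : ∀ f, C f = f + ((q:ℂ)-1) • s (a f) := by
    intro f
    simp [hCdef, Module.End.mul_apply]
  have hasC : a * s = s * a + C := by
    rw [hE, hCdef]; module
  have hCs : C * s = (q:ℂ) • (s * C) := by
    rw [hCdef, add_mul, one_mul, smul_mul_assoc, mul_assoc, hE]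
    simp only [mul_add, mul_one, mul_smul_comm, smul_add, ← mul_assoc]
    module
  have haC : a * C = (q:ℂ) • (C * a) := by
    rw [hCdef, mul_add, mul_one, mul_smul_comm, ← mul_assoc, hE]
    simp only [add_mul, one_mul, smul_mul_assoc, mul_assoc, smul_add]
    module
  have hCsm : ∀ m : ℕ, C * s^m = ((q:ℂ))^m • (s^m * C) := by
    intro m
    induction m with
    | zero => simp
    | succ m ih =>
        rw [pow_succ' s m, ← mul_assoc, hCs, smul_mul_assoc, mul_assoc, ih]
        rw [mul_smul_comm, smul_smul, ← mul_assoc, ← pow_succ' s m, pow_succ' (q:ℂ) m]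
  have haCk : ∀ k : ℕ, a * C^k = ((q:ℂ))^k • (C^k * a) := by
    intro k
    induction k with
    | zero => simp
    | succ k ih =>
        rw [pow_succ' C k, ← mul_assoc, haC, smul_mul_assoc, mul_assoc, ih]
        rw [mul_smul_comm, smul_smul, ← mul_assoc, ← pow_succ' C k, pow_succ' (q:ℂ) k]
  have hasm : ∀ m : ℕ, a * s^m = s^m * a + ((qnum q m : ℝ) : ℂ) • (s^(m-1) * C) := by
    intro m
    induction m with
    | zero => simp [Stmt9Aux.qnum]
    | succ m ih =>
        rw [pow_succ' s m, ← mul_assoc, hasC, add_mul, mul_assoc, ih]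
        rcases m with _|m
        · simp [Stmt9Aux.qnum]
        · have h1 : s * (s^(m+1) * a) = s^(m+2) * a := by rw [← mul_assoc, ← pow_succ']
          have h2 : s * (s^(m+1-1) * C) = s^(m+1) * C := by
            rw [← mul_assoc, Nat.add_sub_cancel, ← pow_succ']
          have h3 : C * s^(m+1) = ((q:ℂ))^(m+1) • (s^(m+1) * C) := hCsm (m+1)
          rw [mul_add, mul_smul_comm, h1, h2, h3, Nat.add_sub_cancel]
          have hq : ((Stmt9Aux.qnum q (m+2) : ℝ) : ℂ)
              = ((Stmt9Aux.qnum q (m+1) : ℝ) : ℂ) + ((q:ℂ))^(m+1) := by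
            rw [Stmt9Aux.qnum_succ (m+1)]; push_cast; ring
          rw [hq, add_smul, show s * s^(m+1) = s^(m+2) from (pow_succ' s (m+1)).symm]
          abel
  -- normal ordering
  have horder : ∀ i j : ℕ, a^i * s^j = ∑ k ∈ Finset.range (i+1),
      ((Tc q i j k : ℝ) : ℂ) • (s^(j-k) * C^k * a^(i-k)) := by
    have key : ∀ m k r : ℕ, a * (s^m * C^k * a^r)
        = ((q:ℂ))^k • (s^m * C^k * a^(r+1))
          + ((qnum q m : ℝ) : ℂ) • (s^(m-1) * C^(k+1) * a^r) := by
      intro m k r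
      calc a * (s^m * C^k * a^r)
          = ((a * s^m) * C^k) * a^r := by rw [← mul_assoc, ← mul_assoc]
        _ = ((s^m * (a * C^k)) * a^r) + ((qnum q m : ℝ) : ℂ) • ((s^(m-1) * (C * C^k)) * a^r) := by
              rw [hasm m, add_mul, add_mul, smul_mul_assoc, smul_mul_assoc,
                mul_assoc (s^m) a (C^k), mul_assoc (s^(m-1)) C (C^k)]
        _ = ((q:ℂ))^k • (s^m * C^k * a^(r+1))
          + ((qnum q m : ℝ) : ℂ) • (s^(m-1) * C^(k+1) * a^r) := by
              rw [haCk k, ← pow_succ' C k, mul_smul_comm, smul_mul_assoc]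
              congr 1
              rw [mul_assoc (s^m) (C^k * a) (a^r), mul_assoc (C^k) a (a^r),
                ← pow_succ' a r, ← mul_assoc]
    intro i j
    induction i with
    | zero =>
        simp [Tc]
    | succ i ih =>
        have hA : a^(i+1) * s^j = ∑ k ∈ Finset.range (i+1),
            ((Tc q i j k : ℝ) : ℂ) • (a * (s^(j-k) * C^k * a^(i-k))) := by
          rw [pow_succ' a i, mul_assoc, ih, Finset.mul_sum]
          exact Finset.sum_congr rfl fun k _ => (mul_smul_comm _ _ _)
        rw [hA]
        set Z : ℕ → Module.End ℂ E := fun k => s^(j-k) * C^k * a^(i+1-k) with hZ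
        have hstep : ∀ k ∈ Finset.range (i+1),
            ((Tc q i j k : ℝ) : ℂ) • (a * (s^(j-k) * C^k * a^(i-k)))
            = (((Tc q i j k : ℝ) : ℂ) * ((q:ℂ))^k) • Z k
              + (((qnum q (j-k) * Tc q i j k : ℝ)) : ℂ) • Z (k+1) := by
          intro k hk
          rw [Finset.mem_range] at hk
          have hik : i - k + 1 = i + 1 - k := by omega
          have hjk : j - k - 1 = j - (k+1) := by omega
          have hik2 : i - k = i + 1 - (k+1) := by omega
          rw [key (j-k) k (i-k), smul_add, smul_smul, smul_smul, hik, hjk, hik2]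
          congr 1
          rw [Complex.ofReal_mul, mul_comm]
        rw [Finset.sum_congr rfl hstep, Finset.sum_add_distrib]
        rw [Finset.sum_range_succ' (fun k => ((Tc q (i+1) j k : ℝ) : ℂ) • Z k) (i+1)]
        have hTc0 : ((Tc q (i+1) j 0 : ℝ) : ℂ) = ((Tc q i j 0 : ℝ) : ℂ) := by norm_cast
        have hTcS : ∀ k, ((Tc q (i+1) j (k+1) : ℝ) : ℂ)
            = ((q:ℂ))^(k+1) * ((Tc q i j (k+1) : ℝ) : ℂ)
              + ((qnum q (j-k) * Tc q i j k : ℝ) : ℂ) := by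
          intro k; push_cast [Tc]; ring
        calc (∑ k ∈ Finset.range (i+1), (((Tc q i j k : ℝ) : ℂ) * ((q:ℂ))^k) • Z k)
              + ∑ k ∈ Finset.range (i+1), (((qnum q (j-k) * Tc q i j k : ℝ)) : ℂ) • Z (k+1)
            = (∑ k ∈ Finset.range (i+1), ((q:ℂ))^(k+1) • (((Tc q i j (k+1) : ℝ) : ℂ) • Z (k+1))
                + ((Tc q i j 0 : ℝ) : ℂ) • Z 0)
              + ∑ k ∈ Finset.range (i+1), (((qnum q (j-k) * Tc q i j k : ℝ)) : ℂ) • Z (k+1) := by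
              congr 1
              rw [Finset.sum_range_succ' (fun k => (((Tc q i j k : ℝ) : ℂ) * ((q:ℂ))^k) • Z k) i]
              congr 1
              · rw [Finset.sum_range_succ]
                rw [Tc_eq_zero j (by omega : i < i + 1)]
                simp only [Complex.ofReal_zero, zero_mul, zero_smul, smul_zero, add_zero]
                exact Finset.sum_congr rfl fun k _ => by rw [smul_smul, mul_comm]
              · norm_num
          _ = ∑ k ∈ Finset.range (i+1), ((Tc q (i+1) j (k+1) : ℝ) : ℂ) • Z (k+1)
              + ((Tc q (i+1) j 0 : ℝ) : ℂ) • Z 0 := by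
              rw [hTc0, add_right_comm]
              congr 1
              rw [← Finset.sum_add_distrib]
              refine Finset.sum_congr rfl fun k _ => ?_
              rw [hTcS k, add_smul, smul_smul]
  -- moving powers across the inner product
  have hmovi : ∀ (i : ℕ) (x y : E), ⟪(s^i) x, y⟫ = ⟪x, (a^i) y⟫ := by
    intro i
    induction i with
    | zero => intro x y; simp
    | succ i ih =>
        intro x y
        rw [pow_succ s i, pow_succ' a i, Module.End.mul_apply, Module.End.mul_apply,
          ih (s x) y, hadj]
  have hmovi' : ∀ (i : ℕ) (x y : E), ⟪x, (s^i) y⟫ = ⟪(a^i) x, y⟫ := by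
    intro i x y
    rw [← inner_conj_symm, hmovi, inner_conj_symm]
  -- symmetry and positivity of C
  have hconjq : (starRingEnd ℂ) ((q:ℂ) - 1) = (q:ℂ) - 1 := by
    rw [map_sub, map_one, Complex.conj_ofReal]
  have hCsym : ∀ x y : E, ⟪C x, y⟫ = ⟪x, C y⟫ := by
    intro x y
    rw [hCapp, hCapp, inner_add_left, inner_add_right, inner_smul_left, inner_smul_right,
      hconjq, hadj (a x) y, hadj' x (a y)]
  have hCpos : ∀ v : E, 0 ≤ (⟪C v, v⟫).re ∧ (⟪C v, v⟫).im = 0 := by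
    intro v
    rw [hCapp]
    exact hpos v
  have hCkpos : ∀ (k : ℕ) (v : E), 0 ≤ (⟪v, (C^k) v⟫).re ∧ (⟪v, (C^k) v⟫).im = 0 := by
    intro k
    induction k using Nat.twoStepInduction with
    | zero =>
        intro v
        simp only [pow_zero, Module.End.one_apply]
        have hvv : (inner ℂ v v : ℂ) = ((‖v‖^2 : ℝ) : ℂ) := by
          rw [inner_self_eq_norm_sq_to_K]; norm_cast
        rw [hvv]
        exact ⟨by rw [Complex.ofReal_re]; positivity, by rw [Complex.ofReal_im]⟩
    | one =>
        intro v
        have h := hCpos v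
        rw [pow_one, ← inner_conj_symm]
        constructor
        · rw [Complex.conj_re]; exact h.1
        · rw [Complex.conj_im, h.2, neg_zero]
    | more k ih _ =>
        intro v
        have hC2 : (C^(k+2)) v = C ((C^k) (C v)) := by
          have : C^(k+2) = C * (C^k * C) := by
            rw [← pow_succ C k, ← pow_succ' C (k+1)]
          rw [this, Module.End.mul_apply, Module.End.mul_apply]
        have hsw : ⟪v, (C^(k+2)) v⟫ = ⟪C v, (C^k) (C v)⟫ := by
          rw [hC2, ← hCsym v ((C^k) (C v))]
        rw [hsw]
        exact ih (C v)
  -- if q < 0 then C vanishes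
  have hCzero : q < 0 → C = 0 := by
    intro hq
    rw [← inner_map_self_eq_zero]
    intro v
    -- the key recursion: γ(s v) = q γ(v) + q³ γ(a v)
    have hCsv : C (s v) = (q:ℂ) • s (C v) := by
      have := congrFun (congrArg DFunLike.coe hCs) v
      simpa [Module.End.mul_apply] using this
    have haCv : a (C v) = (q:ℂ) • C (a v) := by
      have := congrFun (congrArg DFunLike.coe haC) v
      simpa [Module.End.mul_apply] using this
    have hrec : ⟪C (s v), s v⟫ = ((q:ℝ):ℂ) * ⟪C v, v⟫ + ((q^3:ℝ):ℂ) * ⟪C (a v), a v⟫ := by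
      have h1 : a (s v) = (q:ℂ) • s (a v) + v := by
        have := heqn v
        rw [sub_eq_iff_eq_add] at this
        rw [this]; abel
      rw [hCsv, inner_smul_left, hadj (C v) (s v), h1, inner_add_right, inner_smul_right,
        hadj' (C v) (a v), haCv, inner_smul_left]
      simp only [Complex.conj_ofReal]
      push_cast
      ring
    have him : ∀ w : E, (⟪C w, w⟫).im = 0 := fun w => (hCpos w).2
    have hre : ∀ w : E, 0 ≤ (⟪C w, w⟫).re := fun w => (hCpos w).1
    have hrecre : (⟪C (s v), s v⟫).re = q * (⟪C v, v⟫).re + q^3 * (⟪C (a v), a v⟫).re := by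
      have h := congrArg Complex.re hrec
      simp only [Complex.add_re, Complex.mul_re, Complex.ofReal_re, Complex.ofReal_im,
        him v, him (a v), mul_zero, zero_mul, sub_zero] at h
      exact h
    have hx : (⟪C v, v⟫).re = 0 := by
      have h1 := hre v
      have h2 := hre (a v)
      have h3 := hre (s v)
      nlinarith [sq_nonneg q, mul_nonneg (mul_nonneg (le_of_lt (neg_pos.mpr hq)) (le_of_lt (neg_pos.mpr hq))) h2]
    exact Complex.ext hx (him v)
  -- ============ the main computation ============
  intro p f
  set R := Finset.range (p+1) with hR
  set u : ℕ → E := fun k => ∑ i ∈ R, ((qb q i k : ℝ) : ℂ) • (a^(i-k)) (f i) with hu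
  have step1 : ∀ i ∈ R, ∀ j ∈ R, ⟪(s^i) (f j), (s^j) (f i)⟫
      = ∑ k ∈ R, ((Tc q i j k : ℝ) : ℂ) * ⟪(a^(j-k)) (f j), (C^k) ((a^(i-k)) (f i))⟫ := by
    intro i hi j hj
    rw [hR, Finset.mem_range] at hi
    have h1 : ⟪(s^i) (f j), (s^j) (f i)⟫ = ⟪f j, (a^i * s^j) (f i)⟫ := by
      rw [Module.End.mul_apply, hmovi]
    rw [h1, horder i j, LinearMap.sum_apply, inner_sum]
    have h2 : ∀ k ∈ Finset.range (i+1),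
        ⟪f j, (((Tc q i j k : ℝ) : ℂ) • (s^(j-k) * C^k * a^(i-k))) (f i)⟫
        = ((Tc q i j k : ℝ) : ℂ) * ⟪(a^(j-k)) (f j), (C^k) ((a^(i-k)) (f i))⟫ := by
      intro k hk
      rw [LinearMap.smul_apply, inner_smul_right, Module.End.mul_apply, Module.End.mul_apply,
        hmovi']
    rw [Finset.sum_congr rfl h2]
    refine Finset.sum_subset ?_ ?_
    · rw [hR]
      exact Finset.range_subset_range.mpr (by omega)
    · intro k hkR hk
      rw [Finset.mem_range] at hk
      have hik : i < k := by omega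
      rw [Tc_eq_zero j hik]
      simp
  have step3 : ∀ k ∈ R,
      (∑ i ∈ R, ∑ j ∈ R, ((Tc q i j k : ℝ) : ℂ)
          * ⟪(a^(j-k)) (f j), (C^k) ((a^(i-k)) (f i))⟫)
      = ((qfact q k : ℝ) : ℂ) * ⟪u k, (C^k) (u k)⟫ := by
    intro k _
    have hCku : (C^k) (u k) = ∑ i ∈ R, ((qb q i k : ℝ) : ℂ) • (C^k) ((a^(i-k)) (f i)) := by
      rw [hu]
      simp only [map_sum, map_smul]
    rw [hCku, inner_sum, Finset.mul_sum]
    refine Finset.sum_congr rfl fun i _ => ?_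
    rw [inner_smul_right, hu]
    rw [sum_inner]
    rw [Finset.mul_sum, Finset.mul_sum]
    refine Finset.sum_congr rfl fun j _ => ?_
    rw [inner_smul_left, Complex.conj_ofReal, Tc_eq]
    push_cast
    ring
  have key : (∑ i ∈ R, ∑ j ∈ R, ⟪(s^i) (f j), (s^j) (f i)⟫)
      = ∑ k ∈ R, ((qfact q k : ℝ) : ℂ) * ⟪u k, (C^k) (u k)⟫ := by
    calc (∑ i ∈ R, ∑ j ∈ R, ⟪(s^i) (f j), (s^j) (f i)⟫)
        = ∑ i ∈ R, ∑ j ∈ R, ∑ k ∈ R, ((Tc q i j k : ℝ) : ℂ)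
            * ⟪(a^(j-k)) (f j), (C^k) ((a^(i-k)) (f i))⟫ :=
          Finset.sum_congr rfl fun i hi => Finset.sum_congr rfl fun j hj => step1 i hi j hj
      _ = ∑ i ∈ R, ∑ k ∈ R, ∑ j ∈ R, ((Tc q i j k : ℝ) : ℂ)
            * ⟪(a^(j-k)) (f j), (C^k) ((a^(i-k)) (f i))⟫ :=
          Finset.sum_congr rfl fun i _ => Finset.sum_comm
      _ = ∑ k ∈ R, ∑ i ∈ R, ∑ j ∈ R, ((Tc q i j k : ℝ) : ℂ)
            * ⟪(a^(j-k)) (f j), (C^k) ((a^(i-k)) (f i))⟫ := Finset.sum_comm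
      _ = ∑ k ∈ R, ((qfact q k : ℝ) : ℂ) * ⟪u k, (C^k) (u k)⟫ :=
          Finset.sum_congr rfl step3
  have hterm : ∀ k ∈ R,
      0 ≤ (((qfact q k : ℝ) : ℂ) * ⟪u k, (C^k) (u k)⟫).re ∧
      (((qfact q k : ℝ) : ℂ) * ⟪u k, (C^k) (u k)⟫).im = 0 := by
    intro k _
    have hg := hCkpos k (u k)
    rcases le_or_gt 0 q with hq | hq
    · have hf : 0 ≤ qfact q k := qfact_nonneg hq k
      rw [Complex.re_ofReal_mul, Complex.im_ofReal_mul]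
      exact ⟨mul_nonneg hf hg.1, by rw [hg.2, mul_zero]⟩
    · rcases Nat.eq_zero_or_pos k with rfl | hk
      · have h0 : ((qfact q 0 : ℝ) : ℂ) = 1 := by norm_num [qfact]
        rw [h0, one_mul]
        exact hg
      · have hCk : (C^k) (u k) = 0 := by
          rw [hCzero hq, zero_pow (by omega : k ≠ 0)]
          rfl
        rw [hCk, inner_zero_right, mul_zero]
        simp
  rw [key, Complex.re_sum, Complex.im_sum]
  exact ⟨Finset.sum_nonneg fun k hk => (hterm k hk).1,
    Finset.sum_eq_zero fun k hk => (hterm k hk).2⟩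

end Abstract


/-- Let `S` satisfy `(O_{q,D})` on a dense subspace `D` invariant under `S`
and `S*` which is a core of `S`, and assume the selfcommutator `C = I + (q-1) S S*` is
positive on `D`. Then `Σ_{i,j=0}^{p} ⟨S^i f_j, S^j f_i⟩ ≥ 0` for all `f_0, …, f_p ∈ D`. -/
theorem stmt9 (q : ℝ) (S : H →ₗ.[ℂ] H) (D : Submodule ℂ H)
    (hdense : Dense (S.domain : Set H)) (hDdense : Dense (D : Set H))
    (hD : D ≤ S.domain) (hDA : D ≤ S.adjoint.domain)
    (hcore : IsCoreOf S D)
    (s a c : Module.End ℂ D)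
    (hs : ∀ f : D, (s f : H) = S ⟨(f : H), hD f.2⟩)
    (ha : ∀ f : D, (a f : H) = S.adjoint ⟨(f : H), hDA f.2⟩)
    (hc : ∀ f : D, (c f : H) = (f : H) + ((q : ℂ) - 1) • (s (a f) : H))
    (heqn : ∀ f : D, a (s f) - (q : ℂ) • s (a f) = f)
    (hpos : ∀ f : D, 0 ≤ (inner ℂ ((c f : H)) (f : H) : ℂ).re ∧
      (inner ℂ ((c f : H)) (f : H) : ℂ).im = 0) :
    ∀ (p : ℕ) (f : ℕ → D),
      0 ≤ (∑ i ∈ Finset.range (p + 1), ∑ j ∈ Finset.range (p + 1),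
            (inner ℂ (((s ^ i) (f j) : H)) (((s ^ j) (f i) : H)) : ℂ)).re ∧
      (∑ i ∈ Finset.range (p + 1), ∑ j ∈ Finset.range (p + 1),
            (inner ℂ (((s ^ i) (f j) : H)) (((s ^ j) (f i) : H)) : ℂ)).im = 0 := by
  have hadjD : ∀ x y : D, (inner ℂ (s x) y : ℂ) = (inner ℂ x (a y) : ℂ) := by
    intro x y
    rw [Submodule.coe_inner, Submodule.coe_inner, hs x, ha y]
    exact (LinearPMap.adjoint_isFormalAdjoint hdense).symm ⟨(x : H), hD x.2⟩ ⟨(y : H), hDA y.2⟩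
  have hposD : ∀ f : D, 0 ≤ (inner ℂ (f + ((q:ℂ)-1) • s (a f)) f : ℂ).re ∧
      (inner ℂ (f + ((q:ℂ)-1) • s (a f)) f : ℂ).im = 0 := by
    intro f
    have hcoe : ((f + ((q:ℂ)-1) • s (a f) : D) : H) = (c f : H) := by
      rw [hc f]
      push_cast
      rfl
    have heq : (inner ℂ (f + ((q:ℂ)-1) • s (a f)) f : ℂ) = (inner ℂ ((c f : H)) (f : H) : ℂ) := by
      rw [Submodule.coe_inner, hcoe]
    rw [heq]
    exact hpos f
  intro p f
  have hmain := stmt9_abstract q s a hadjD heqn hposD p f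
  simpa only [Submodule.coe_inner] using hmain

end
end

section
/- Let q ≥ 1 and let S be a densely defined closable operator in a nonzero complex Hilbert space H such that S satisfies (O_{q,w}) and dom S̄ = dom S*. Then the kernel of S* is nontrivial: ker S* ≠ {0}. -/
noncomputable section

variable {H : Type*} [NormedAddCommGroup H] [InnerProductSpace ℂ H] [CompleteSpace H]

/-- Real-valued norm identity on `dom S`. -/
lemma normid_aux (q : ℝ) (S : H →ₗ.[ℂ] H) (hw : SatOqW q S) :
    ∀ f (hf : f ∈ S.domain) (hf' : f ∈ S.adjoint.domain),
      ‖S ⟨f, hf⟩‖ ^ 2 = ‖f‖ ^ 2 + q * ‖S.adjoint ⟨f, hf'⟩‖ ^ 2 := by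
  intro f hf hf'
  have h := hw f f hf hf' hf hf'
  rw [inner_self_eq_norm_sq_to_K, inner_self_eq_norm_sq_to_K,
    inner_self_eq_norm_sq_to_K] at h
  rw [show ((q : ℂ)) = RCLike.ofReal q from rfl] at h
  rw [← RCLike.ofReal_pow, ← RCLike.ofReal_pow, ← RCLike.ofReal_pow, ← RCLike.ofReal_mul,
    ← RCLike.ofReal_sub] at h
  have h2 := RCLike.ofReal_inj.mp h
  linarith

/-- Extension of the norm identity and the adjoint pairing to the closure. -/
lemma key_aux (q : ℝ) (hq : 1 ≤ q) (S : H →ₗ.[ℂ] H)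
    (hdense : Dense (S.domain : Set H)) (hclos : S.IsClosable)
    (hw : SatOqW q S) (hdomeq : S.closure.domain = S.adjoint.domain) :
    ∀ x (hx : x ∈ S.closure.domain),
      (‖S.closure ⟨x, hx⟩‖ ^ 2
          = ‖x‖ ^ 2 + q * ‖S.adjoint ⟨x, hdomeq ▸ hx⟩‖ ^ 2) ∧
        ∀ y : S.adjoint.domain,
          (inner ℂ (S.closure ⟨x, hx⟩) (y : H) : ℂ) = inner ℂ x (S.adjoint y) := by
  have hformal : S.adjoint.IsFormalAdjoint S := LinearPMap.adjoint_isFormalAdjoint hdense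
  have hDS : ∀ z ∈ S.domain, z ∈ S.adjoint.domain := fun z hz =>
    hdomeq ▸ S.le_closure.1 hz
  -- norm comparison on dom S
  have hbound : ∀ (d : S.domain) (hd' : (d : H) ∈ S.adjoint.domain),
      ‖S.adjoint ⟨(d : H), hd'⟩‖ ≤ ‖S d‖ := by
    intro d hd'
    have h := normid_aux q S hw (d : H) d.2 hd'
    have hS : S ⟨(d : H), d.2⟩ = S d := rfl
    rw [hS] at h
    have hsq : ‖S.adjoint ⟨(d : H), hd'⟩‖ ^ 2 ≤ ‖S d‖ ^ 2 := by nlinarith [norm_nonneg (d : H), norm_nonneg (S.adjoint ⟨(d : H), hd'⟩)]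
    exact (pow_le_pow_iff_left₀ (norm_nonneg _) (norm_nonneg _) two_ne_zero).mp hsq
  intro x hx
  -- get an approximating sequence in the graph of S
  have hmemg : (x, S.closure ⟨x, hx⟩) ∈ S.closure.graph :=
    S.closure.mem_graph ⟨x, hx⟩
  rw [← hclos.graph_closure_eq_closure_graph] at hmemg
  have hmemc : (x, S.closure ⟨x, hx⟩) ∈ closure (S.graph : Set (H × H)) := by
    rw [← Submodule.topologicalClosure_coe]; exact hmemg
  obtain ⟨p, hpmem, hplim⟩ := mem_closure_iff_seq_limit.mp hmemc
  have hex : ∀ n, ∃ y : S.domain, (y : H) = (p n).1 ∧ S y = (p n).2 := fun n =>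
    S.mem_graph_iff.mp (hpmem n)
  choose fn hfst hsnd using hex
  have hx1 : Filter.Tendsto (fun n => ((fn n : H))) Filter.atTop (nhds x) := by
    have := (continuous_fst.tendsto _).comp hplim
    simpa [Function.comp_def, hfst] using this
  have hx2 : Filter.Tendsto (fun n => S (fn n)) Filter.atTop
      (nhds (S.closure ⟨x, hx⟩)) := by
    have := (continuous_snd.tendsto _).comp hplim
    simpa [Function.comp_def, hsnd] using this
  set Fn : ℕ → S.adjoint.domain := fun n => ⟨(fn n : H), hDS _ (fn n).2⟩ with hFn
  set gn : ℕ → H := fun n => S.adjoint (Fn n) with hgn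
  -- gn is Cauchy
  have hgnc : CauchySeq gn := by
    have hSc : CauchySeq (fun n => S (fn n)) := hx2.cauchySeq
    rw [Metric.cauchySeq_iff] at hSc ⊢
    intro ε hε
    obtain ⟨N, hN⟩ := hSc ε hε
    refine ⟨N, fun m hm n hn => ?_⟩
    have h1 := hN m hm n hn
    rw [dist_eq_norm] at h1 ⊢
    have hsub : gn m - gn n = S.adjoint (Fn m - Fn n) := (S.adjoint.map_sub _ _).symm
    have hFnsub : Fn m - Fn n
        = ⟨((fn m - fn n : S.domain) : H), hDS _ (fn m - fn n).2⟩ := by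
      apply Subtype.ext; simp [hFn]
    have hb := hbound (fn m - fn n) (hDS _ (fn m - fn n).2)
    have hSsub : S (fn m - fn n) = S (fn m) - S (fn n) := S.map_sub _ _
    rw [hsub, hFnsub]
    calc ‖S.adjoint ⟨((fn m - fn n : S.domain) : H), hDS _ (fn m - fn n).2⟩‖
        ≤ ‖S (fn m - fn n)‖ := hb
      _ = ‖S (fn m) - S (fn n)‖ := by rw [hSsub]
      _ < ε := h1
  obtain ⟨z, hz⟩ := cauchySeq_tendsto_of_complete hgnc
  set x' : S.adjoint.domain := ⟨x, hdomeq ▸ hx⟩ with hx'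
  -- identify the limit of gn with S.adjoint x'
  have hzx : z = S.adjoint x' := by
    apply hdense.eq_of_inner_left (𝕜 := ℂ)
    intro v' hv
    let v : S.domain := ⟨v', hv⟩
    show inner ℂ z (v : H) = inner ℂ (S.adjoint x') (v : H)
    have h1 : ∀ n, (inner ℂ (gn n) (v : H) : ℂ) = inner ℂ ((fn n : H)) (S v) := fun n =>
      hformal (Fn n) v
    have h2 : Filter.Tendsto (fun n => (inner ℂ (gn n) (v : H) : ℂ)) Filter.atTop
        (nhds (inner ℂ z (v : H))) := hz.inner tendsto_const_nhds
    have h3 : Filter.Tendsto (fun n => (inner ℂ ((fn n : H)) (S v) : ℂ)) Filter.atTop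
        (nhds (inner ℂ x (S v))) := hx1.inner tendsto_const_nhds
    have h4 : (inner ℂ z (v : H) : ℂ) = inner ℂ x (S v) := by
      refine tendsto_nhds_unique h2 ?_
      simpa [h1] using h3
    rw [h4, hformal x' v]
  rw [hzx] at hz
  constructor
  · -- norm identity
    have hA : Filter.Tendsto (fun n => ‖S (fn n)‖ ^ 2) Filter.atTop
        (nhds (‖S.closure ⟨x, hx⟩‖ ^ 2)) := (hx2.norm).pow 2
    have hB : Filter.Tendsto (fun n => ‖(fn n : H)‖ ^ 2 + q * ‖gn n‖ ^ 2) Filter.atTop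
        (nhds (‖x‖ ^ 2 + q * ‖S.adjoint x'‖ ^ 2)) :=
      ((hx1.norm).pow 2).add (((hz.norm).pow 2).const_mul q)
    have heq : ∀ n, ‖S (fn n)‖ ^ 2 = ‖(fn n : H)‖ ^ 2 + q * ‖gn n‖ ^ 2 := by
      intro n
      have h := normid_aux q S hw ((fn n : H)) (fn n).2 (hDS _ (fn n).2)
      simpa using h
    have := tendsto_nhds_unique hA (by simpa [heq] using hB)
    simpa [hx'] using this
  · -- pairing identity
    intro y
    have h1 : ∀ n, (inner ℂ (S (fn n)) (y : H) : ℂ) = inner ℂ ((fn n : H)) (S.adjoint y) :=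
      fun n => hformal.symm (fn n) y
    have h2 : Filter.Tendsto (fun n => (inner ℂ (S (fn n)) (y : H) : ℂ)) Filter.atTop
        (nhds (inner ℂ (S.closure ⟨x, hx⟩) (y : H))) := hx2.inner tendsto_const_nhds
    have h3 : Filter.Tendsto (fun n => (inner ℂ ((fn n : H)) (S.adjoint y) : ℂ)) Filter.atTop
        (nhds (inner ℂ x (S.adjoint y))) := hx1.inner tendsto_const_nhds
    refine tendsto_nhds_unique h2 ?_
    simpa [h1] using h3

/-- If `q ≥ 1` and `S` is a densely defined closable operator in a nonzero
Hilbert space satisfying `(O_{q,w})` with `dom S̄ = dom S*`, then `ker S* ≠ {0}`. -/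
theorem stmt10 (q : ℝ) (hq : 1 ≤ q) [Nontrivial H] (S : H →ₗ.[ℂ] H)
    (hdense : Dense (S.domain : Set H)) (hclos : S.IsClosable)
    (hw : SatOqW q S) (hdomeq : S.closure.domain = S.adjoint.domain) :
    ∃ (f : H) (hf : f ∈ S.adjoint.domain), f ≠ 0 ∧ S.adjoint ⟨f, hf⟩ = 0 := by
  by_contra hcon
  push_neg at hcon
  have hker : ∀ f (hf : f ∈ S.adjoint.domain), S.adjoint ⟨f, hf⟩ = 0 → f = 0 := by
    intro f hf h
    by_contra hne
    exact hcon f hf hne h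
  have key := key_aux q hq S hdense hclos hw hdomeq
  -- range of S is dense
  have hdenseR : (LinearMap.range S.toFun).topologicalClosure = ⊤ := by
    rw [Submodule.topologicalClosure_eq_top_iff, Submodule.eq_bot_iff]
    intro y hy
    have hy' : ∀ u ∈ LinearMap.range S.toFun, (inner ℂ u y : ℂ) = 0 :=
      (Submodule.mem_orthogonal _ y).mp hy
    have hzero : ∀ x : S.domain, (inner ℂ y (S x) : ℂ) = 0 := by
      intro x
      have := hy' (S x) ⟨x, rfl⟩
      rw [← inner_conj_symm, this, map_zero]
    have hyd : y ∈ S.adjoint.domain :=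
      LinearPMap.mem_adjoint_domain_of_exists _
        ⟨0, fun x => by rw [inner_zero_left, hzero x]⟩
    have h0 : S.adjoint ⟨y, hyd⟩ = 0 :=
      LinearPMap.adjoint_apply_eq hdense _ (fun x => by rw [inner_zero_left, hzero x])
    exact hker y hyd h0
  -- the closure of S is surjective
  have hlow : ∀ d : S.domain, ‖(d : H)‖ ≤ ‖S d‖ := by
    intro d
    have h := normid_aux q S hw (d : H) d.2 (hdomeq ▸ S.le_closure.1 d.2)
    have hS : S ⟨(d : H), d.2⟩ = S d := rfl
    rw [hS] at h
    have hsq : ‖(d : H)‖ ^ 2 ≤ ‖S d‖ ^ 2 := by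
      nlinarith [norm_nonneg (S.adjoint ⟨(d : H), hdomeq ▸ S.le_closure.1 d.2⟩)]
    exact (pow_le_pow_iff_left₀ (norm_nonneg _) (norm_nonneg _) two_ne_zero).mp hsq
  have hsurj : ∀ u : H, ∃ d : S.closure.domain, S.closure d = u := by
    intro u
    have hu : u ∈ closure (LinearMap.range S.toFun : Set H) := by
      rw [← Submodule.topologicalClosure_coe, hdenseR]
      trivial
    obtain ⟨p, hpmem, hplim⟩ := mem_closure_iff_seq_limit.mp hu
    have hex : ∀ n, ∃ d : S.domain, S d = p n := fun n => hpmem n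
    choose fn hfn using hex
    have hpc : CauchySeq p := hplim.cauchySeq
    have hfc : CauchySeq (fun n => ((fn n : H))) := by
      rw [Metric.cauchySeq_iff] at hpc ⊢
      intro ε hε
      obtain ⟨N, hN⟩ := hpc ε hε
      refine ⟨N, fun m hm n hn => ?_⟩
      have h1 := hN m hm n hn
      rw [dist_eq_norm] at h1 ⊢
      calc ‖((fn m : H)) - ((fn n : H))‖ = ‖((fn m - fn n : S.domain) : H)‖ := by
            push_cast; ring_nf
        _ ≤ ‖S (fn m - fn n)‖ := hlow _
        _ = ‖p m - p n‖ := by rw [S.map_sub, hfn, hfn]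
        _ < ε := h1
    obtain ⟨x, hxl⟩ := cauchySeq_tendsto_of_complete hfc
    have hgr : (x, u) ∈ closure (S.graph : Set (H × H)) := by
      apply mem_closure_of_tendsto (f := fun n => (((fn n : H)), p n))
        (hxl.prodMk_nhds hplim)
      filter_upwards with n
      have : (((fn n : H)), S (fn n)) ∈ S.graph := S.mem_graph (fn n)
      rwa [hfn n] at this
    have hgr2 : (x, u) ∈ S.closure.graph := by
      rw [← hclos.graph_closure_eq_closure_graph]
      rw [← Submodule.topologicalClosure_coe] at hgr
      exact hgr
    obtain ⟨d, hd⟩ := S.closure.mem_graph_iff.mp hgr2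
    exact ⟨d, hd.2⟩
  -- the inverse map T and the operator B
  set T : H → S.closure.domain := fun u => (hsurj u).choose with hTdef
  have hT : ∀ u, S.closure (T u) = u := fun u => (hsurj u).choose_spec
  set B : H → H := fun u => S.adjoint ⟨((T u : H)), hdomeq ▸ (T u).2⟩ with hBdef
  -- K1: norm identity for T, B
  have K1 : ∀ u, ‖u‖ ^ 2 = ‖((T u : H))‖ ^ 2 + q * ‖B u‖ ^ 2 := by
    intro u
    have h := (key _ (T u).2).1
    have hC : S.closure ⟨((T u : H)), (T u).2⟩ = u := by
      rw [show (⟨((T u : H)), (T u).2⟩ : S.closure.domain) = T u from rfl, hT]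
    rw [hC] at h
    exact h
  -- K2: ⟪v, T u⟫ = ⟪T v, B u⟫
  have K2 : ∀ u v : H, (inner ℂ v ((T u : H)) : ℂ) = inner ℂ ((T v : H)) (B u) := by
    intro u v
    have h := (key _ (T v).2).2 ⟨((T u : H)), hdomeq ▸ (T u).2⟩
    have hC : S.closure ⟨((T v : H)), (T v).2⟩ = v := by
      rw [show (⟨((T v : H)), (T v).2⟩ : S.closure.domain) = T v from rfl, hT]
    rw [hC] at h
    exact h
  -- K2c: conjugate version
  have K2c : ∀ u v : H, (inner ℂ ((T u : H)) v : ℂ) = inner ℂ (B u) ((T v : H)) := by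
    intro u v
    rw [← inner_conj_symm, K2, inner_conj_symm]
  -- K3: ⟪T u, v⟫ = ⟪T (B u), B v⟫
  have K3 : ∀ u v : H, (inner ℂ ((T u : H)) v : ℂ)
      = inner ℂ ((T (B u) : H)) (B v) := fun u v => (K2c u v).trans (K2 v (B u))
  have K3n : ∀ (n : ℕ) (u v : H), (inner ℂ ((T u : H)) v : ℂ)
      = inner ℂ ((T (B^[n] u) : H)) (B^[n] v) := by
    intro n
    induction n with
    | zero => intro u v; simp
    | succ n ih =>
      intro u v
      rw [ih u v, Function.iterate_succ_apply', Function.iterate_succ_apply', K3]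
  -- K4: B is a contraction
  have K4 : ∀ w : H, ‖B w‖ ≤ ‖w‖ := by
    intro w
    have h := K1 w
    have hsq : ‖B w‖ ^ 2 ≤ ‖w‖ ^ 2 := by
      nlinarith [norm_nonneg (B w), norm_nonneg ((T w : H)), sq_nonneg ‖B w‖]
    exact (pow_le_pow_iff_left₀ (norm_nonneg _) (norm_nonneg _) two_ne_zero).mp hsq
  have K4n : ∀ (n : ℕ) (w : H), ‖B^[n] w‖ ≤ ‖w‖ := by
    intro n
    induction n with
    | zero => intro w; simp
    | succ n ih =>
      intro w
      rw [Function.iterate_succ_apply']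
      exact (K4 _).trans (ih w)
  -- K5
  have K5 : ∀ (n : ℕ) (u : H),
      ‖((T u : H))‖ ^ 2 ≤ ‖((T (B^[n] u) : H))‖ * ‖((T u : H))‖ := by
    intro n u
    calc (‖((T u : H))‖ ^ 2 : ℝ)
        = ‖(inner ℂ ((T u : H)) ((T u : H)) : ℂ)‖ := by
          rw [inner_self_eq_norm_sq_to_K]
          simp [norm_pow]
      _ = ‖(inner ℂ ((T (B^[n] u) : H)) (B^[n] ((T u : H))) : ℂ)‖ := by
          rw [K3n n u ((T u : H))]
      _ ≤ ‖((T (B^[n] u) : H))‖ * ‖B^[n] ((T u : H))‖ := norm_inner_le_norm _ _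
      _ ≤ ‖((T (B^[n] u) : H))‖ * ‖((T u : H))‖ :=
          mul_le_mul_of_nonneg_left (K4n n _) (norm_nonneg _)
  -- T is identically zero
  have hTzero : ∀ u : H, ((T u : H)) = 0 := by
    intro u
    by_contra hTu
    have hTpos : 0 < ‖((T u : H))‖ := norm_pos_iff.mpr hTu
    have hTge : ∀ n, ‖((T u : H))‖ ≤ ‖((T (B^[n] u) : H))‖ := by
      intro n
      have h5 := K5 n u
      nlinarith
    have hdesc : ∀ n, ‖B^[n + 1] u‖ ^ 2 ≤ ‖B^[n] u‖ ^ 2 - ‖((T u : H))‖ ^ 2 := by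
      intro n
      have h1 := K1 (B^[n] u)
      have h2 := hTge n
      have h3 : ‖((T u : H))‖ ^ 2 ≤ ‖((T (B^[n] u) : H))‖ ^ 2 := by nlinarith
      have h4 : B^[n + 1] u = B (B^[n] u) := Function.iterate_succ_apply' B n u
      rw [h4]
      nlinarith [sq_nonneg ‖B (B^[n] u)‖]
    have hiter : ∀ n : ℕ, ‖B^[n] u‖ ^ 2 ≤ ‖u‖ ^ 2 - n * ‖((T u : H))‖ ^ 2 := by
      intro n
      induction n with
      | zero => simp
      | succ n ih =>
        have := hdesc n
        push_cast
        linarith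
    obtain ⟨n, hn⟩ := exists_nat_gt (‖u‖ ^ 2 / ‖((T u : H))‖ ^ 2)
    have hTsq : 0 < ‖((T u : H))‖ ^ 2 := by positivity
    have hgt : ‖u‖ ^ 2 < n * ‖((T u : H))‖ ^ 2 := by
      rw [div_lt_iff₀ hTsq] at hn
      linarith
    have := hiter n
    nlinarith [sq_nonneg ‖B^[n] u‖]
  -- conclude: every vector is zero, contradiction with Nontrivial
  obtain ⟨u, hu⟩ := exists_ne (0 : H)
  apply hu
  have hTu0 : T u = 0 := Subtype.ext (hTzero u)
  rw [← hT u, hTu0]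
  exact S.closure.toFun.map_zero
end
end

section
/- Let H be a nonzero complex Hilbert space and let S : H → H be a bounded linear operator satisfying S* S − q S S* = I, where q ∈ ℝ. Then: (a) if q < 0, then ‖S‖ ≥ (1 − q)^{−1/2}; (b) if 0 ≤ q < 1, then ‖S‖ ≤ (1 − q)^{−1/2}; (c) if q ≥ 1, then no such bounded operator S exists. -/
noncomputable section

/-- Let `S` be a bounded operator on a nonzero complex Hilbert space with
`S* S - q S S* = I`. Then (a) if `q < 0` then `‖S‖ ≥ (1-q)^{-1/2}`; (b) if `0 ≤ q < 1` then
`‖S‖ ≤ (1-q)^{-1/2}`; (c) if `q ≥ 1` then no such bounded operator exists. -/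
theorem stmt12 (q : ℝ) {H : Type*} [NormedAddCommGroup H] [InnerProductSpace ℂ H]
    [CompleteSpace H] [Nontrivial H] (S : H →L[ℂ] H)
    (hrel : (ContinuousLinearMap.adjoint S).comp S
        - (q : ℂ) • S.comp (ContinuousLinearMap.adjoint S) = ContinuousLinearMap.id ℂ H) :
    (q < 0 → (Real.sqrt (1 - q))⁻¹ ≤ ‖S‖) ∧
    (0 ≤ q → q < 1 → ‖S‖ ≤ (Real.sqrt (1 - q))⁻¹) ∧
    (1 ≤ q → False) := by
  set T := ContinuousLinearMap.adjoint S with hT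
  have hTnorm : ‖T‖ = ‖S‖ := LinearIsometryEquiv.norm_map ContinuousLinearMap.adjoint S
  have key : ∀ x : H, ‖S x‖ ^ 2 = ‖x‖ ^ 2 + q * ‖T x‖ ^ 2 := by
    intro x
    have h1 := congrArg (fun A : H →L[ℂ] H => (inner ℂ (A x) x : ℂ)) hrel
    simp only [ContinuousLinearMap.sub_apply, ContinuousLinearMap.smul_apply,
      ContinuousLinearMap.comp_apply, ContinuousLinearMap.id_apply,
      inner_sub_left, inner_smul_left] at h1
    rw [ContinuousLinearMap.adjoint_inner_left] at h1
    have h2 : (inner ℂ (S (T x)) x : ℂ) = inner ℂ (T x) (T x) := by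
      conv_lhs => rw [← ContinuousLinearMap.adjoint_adjoint S]
      exact ContinuousLinearMap.adjoint_inner_left _ _ _
    rw [h2] at h1
    rw [inner_self_eq_norm_sq_to_K, inner_self_eq_norm_sq_to_K,
      inner_self_eq_norm_sq_to_K, Complex.conj_ofReal] at h1
    have h3 : ((‖S x‖ ^ 2 - q * ‖T x‖ ^ 2 : ℝ) : ℂ) = ((‖x‖ ^ 2 : ℝ) : ℂ) := by
      push_cast
      exact h1
    have h4 : ‖S x‖ ^ 2 - q * ‖T x‖ ^ 2 = ‖x‖ ^ 2 := by exact_mod_cast h3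
    linarith
  obtain ⟨u, hu⟩ : ∃ x : H, ‖x‖ = 1 := exists_norm_eq H zero_le_one
  have hSu : ‖S u‖ ≤ ‖S‖ := by
    simpa [hu] using S.le_opNorm u
  have hTu : ‖T u‖ ≤ ‖S‖ := by
    simpa [hu, hTnorm] using T.le_opNorm u
  have hkeyu : ‖S u‖ ^ 2 = 1 + q * ‖T u‖ ^ 2 := by simpa [hu] using key u
  refine ⟨?_, ?_, ?_⟩
  · -- (a) q < 0
    intro hq
    have hTu2 : ‖T u‖ ^ 2 ≤ ‖S‖ ^ 2 := pow_le_pow_left₀ (norm_nonneg _) hTu 2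
    have hSu2 : ‖S u‖ ^ 2 ≤ ‖S‖ ^ 2 := pow_le_pow_left₀ (norm_nonneg _) hSu 2
    have h1 : 1 + q * ‖S‖ ^ 2 ≤ ‖S‖ ^ 2 := by nlinarith
    have hpos : (0 : ℝ) < 1 - q := by linarith
    have h2 : (1 - q)⁻¹ ≤ ‖S‖ ^ 2 := by
      rw [← one_div, div_le_iff₀ hpos]; nlinarith
    calc (Real.sqrt (1 - q))⁻¹ = Real.sqrt (1 - q)⁻¹ := (Real.sqrt_inv _).symm
      _ ≤ Real.sqrt (‖S‖ ^ 2) := Real.sqrt_le_sqrt h2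
      _ = ‖S‖ := Real.sqrt_sq (norm_nonneg _)
  · -- (b) 0 ≤ q < 1
    intro hq0 hq1
    have hb : ‖S‖ ≤ Real.sqrt (1 + q * ‖S‖ ^ 2) := by
      apply S.opNorm_le_bound (Real.sqrt_nonneg _)
      intro x
      have hx2 : ‖S x‖ ^ 2 ≤ (1 + q * ‖S‖ ^ 2) * ‖x‖ ^ 2 := by
        have := key x
        have hTx : ‖T x‖ ≤ ‖S‖ * ‖x‖ := by simpa [hTnorm] using T.le_opNorm x
        have hTx2 : ‖T x‖ ^ 2 ≤ (‖S‖ * ‖x‖) ^ 2 := pow_le_pow_left₀ (norm_nonneg _) hTx 2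
        nlinarith
      calc ‖S x‖ = Real.sqrt (‖S x‖ ^ 2) := (Real.sqrt_sq (norm_nonneg _)).symm
        _ ≤ Real.sqrt ((1 + q * ‖S‖ ^ 2) * ‖x‖ ^ 2) := Real.sqrt_le_sqrt hx2
        _ = Real.sqrt (1 + q * ‖S‖ ^ 2) * ‖x‖ := by
            rw [Real.sqrt_mul (by positivity), Real.sqrt_sq (norm_nonneg _)]
    have hsq : ‖S‖ ^ 2 ≤ 1 + q * ‖S‖ ^ 2 := by
      have h := Real.sq_sqrt (by positivity : (0:ℝ) ≤ 1 + q * ‖S‖ ^ 2)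
      nlinarith [norm_nonneg S, Real.sqrt_nonneg (1 + q * ‖S‖ ^ 2)]
    have hpos : (0 : ℝ) < 1 - q := by linarith
    have h2 : ‖S‖ ^ 2 ≤ (1 - q)⁻¹ := by
      rw [← one_div, le_div_iff₀ hpos]; nlinarith
    calc ‖S‖ = Real.sqrt (‖S‖ ^ 2) := (Real.sqrt_sq (norm_nonneg _)).symm
      _ ≤ Real.sqrt (1 - q)⁻¹ := Real.sqrt_le_sqrt h2
      _ = (Real.sqrt (1 - q))⁻¹ := Real.sqrt_inv _
  · -- (c) 1 ≤ q
    intro hq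
    have hq0 : (0 : ℝ) < q := by linarith
    have hSu2 : ‖S u‖ ^ 2 ≤ ‖S‖ ^ 2 := pow_le_pow_left₀ (norm_nonneg _) hSu 2
    have hm1 : 1 ≤ ‖S‖ ^ 2 := by nlinarith [sq_nonneg ‖T u‖]
    have hbT : ‖T‖ ≤ Real.sqrt ((‖S‖ ^ 2 - 1) / q) := by
      apply T.opNorm_le_bound (Real.sqrt_nonneg _)
      intro x
      have hx2 : ‖T x‖ ^ 2 ≤ (‖S‖ ^ 2 - 1) / q * ‖x‖ ^ 2 := by
        have hk := key x
        have hSx : ‖S x‖ ≤ ‖S‖ * ‖x‖ := S.le_opNorm x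
        have hSx2 : ‖S x‖ ^ 2 ≤ (‖S‖ * ‖x‖) ^ 2 := pow_le_pow_left₀ (norm_nonneg _) hSx 2
        rw [div_mul_eq_mul_div, le_div_iff₀ hq0]
        nlinarith
      calc ‖T x‖ = Real.sqrt (‖T x‖ ^ 2) := (Real.sqrt_sq (norm_nonneg _)).symm
        _ ≤ Real.sqrt ((‖S‖ ^ 2 - 1) / q * ‖x‖ ^ 2) := Real.sqrt_le_sqrt hx2
        _ = Real.sqrt ((‖S‖ ^ 2 - 1) / q) * ‖x‖ := by
            rw [Real.sqrt_mul (div_nonneg (by linarith) hq0.le), Real.sqrt_sq (norm_nonneg _)]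
    rw [hTnorm] at hbT
    have hsq : ‖S‖ ^ 2 ≤ (‖S‖ ^ 2 - 1) / q := by
      have h := Real.sq_sqrt (div_nonneg (by linarith : (0:ℝ) ≤ ‖S‖ ^ 2 - 1) hq0.le)
      nlinarith [norm_nonneg S, Real.sqrt_nonneg ((‖S‖ ^ 2 - 1) / q)]
    rw [le_div_iff₀ hq0] at hsq
    nlinarith
end
end

section
/- Let q < 0, let H be a nonzero complex Hilbert space, and let S : H → H be a bounded linear operator satisfying S* S − q S S* = I and ‖S‖ = (1 − q)^{−1/2}. Then √(1 − q) · S is unitary; equivalently, S* S = S S* = (1 − q)^{−1} I. -/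
noncomputable section

open ContinuousLinearMap
open scoped InnerProductSpace

private lemma rc_eq' (r : ℝ) : (RCLike.ofReal r : ℂ) = Complex.ofReal r := rfl

/-- Let `q < 0` and let `S` be a bounded operator on a nonzero complex
Hilbert space with `S* S - q S S* = I` and `‖S‖ = (1-q)^{-1/2}`. Then `√(1-q) • S` is
unitary; equivalently `S* S = S S* = (1-q)⁻¹ I`. -/
theorem stmt13 (q : ℝ) (hq : q < 0) {H : Type*} [NormedAddCommGroup H]
    [InnerProductSpace ℂ H] [CompleteSpace H] [Nontrivial H] (S : H →L[ℂ] H)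
    (hrel : (adjoint S).comp S - (q : ℂ) • S.comp (adjoint S) = ContinuousLinearMap.id ℂ H)
    (hnorm : ‖S‖ = (Real.sqrt (1 - q))⁻¹) :
    ((adjoint ((Real.sqrt (1 - q) : ℂ) • S)).comp ((Real.sqrt (1 - q) : ℂ) • S)
        = ContinuousLinearMap.id ℂ H) ∧
    (((Real.sqrt (1 - q) : ℂ) • S).comp (adjoint ((Real.sqrt (1 - q) : ℂ) • S))
        = ContinuousLinearMap.id ℂ H) ∧
    ((adjoint S).comp S = (((1 - q)⁻¹ : ℝ) : ℂ) • ContinuousLinearMap.id ℂ H) ∧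
    (S.comp (adjoint S) = (((1 - q)⁻¹ : ℝ) : ℂ) • ContinuousLinearMap.id ℂ H) := by
  have h1q : (0:ℝ) < 1 - q := by linarith
  set c : ℝ := (1 - q)⁻¹ with hc
  have hS2 : ‖S‖ ^ 2 = c := by
    rw [hnorm, ← Real.sqrt_inv, Real.sq_sqrt (inv_nonneg.2 h1q.le)]
  have hS'norm : ‖adjoint S‖ = ‖S‖ := adjoint.norm_map S
  have key : ∀ x : H, ‖S x‖ ^ 2 = c * ‖x‖ ^ 2 ∧ ‖adjoint S x‖ ^ 2 = c * ‖x‖ ^ 2 := by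
    intro x
    have hup : ‖S x‖ ^ 2 ≤ c * ‖x‖ ^ 2 := by
      have h := S.le_opNorm x
      nlinarith [norm_nonneg (S x), norm_nonneg x, S.opNorm_nonneg]
    have hup' : ‖adjoint S x‖ ^ 2 ≤ c * ‖x‖ ^ 2 := by
      have h := (adjoint S).le_opNorm x
      rw [hS'norm] at h
      nlinarith [norm_nonneg (adjoint S x), norm_nonneg x, S.opNorm_nonneg]
    have hx : (adjoint S) (S x) - (q : ℂ) • S ((adjoint S) x) = x := by
      have := congrFun (congrArg DFunLike.coe hrel) x
      simpa using this
    have hC : (‖S x‖ ^ 2 : ℂ) - (q : ℂ) * (‖adjoint S x‖ ^ 2 : ℂ) = (‖x‖ ^ 2 : ℂ) := by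
      have := congrArg (fun y => ⟪y, x⟫_ℂ) hx
      simp only [inner_sub_left, inner_smul_left, Complex.conj_ofReal,
        adjoint_inner_left] at this
      rw [show S ((adjoint S) x) = (adjoint (adjoint S)) ((adjoint S) x) by
        rw [adjoint_adjoint]] at this
      rw [adjoint_inner_left] at this
      simpa [inner_self_eq_norm_sq_to_K] using this
    have heq : ‖S x‖ ^ 2 - q * ‖adjoint S x‖ ^ 2 = ‖x‖ ^ 2 := by exact_mod_cast hC
    have hcq : 1 + q * c = c := by
      rw [hc]; field_simp; ring
    have h3 : q * (c * ‖x‖ ^ 2) ≤ q * ‖adjoint S x‖ ^ 2 :=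
      mul_le_mul_of_nonpos_left hup' hq.le
    have h4 : ‖x‖ ^ 2 + q * (c * ‖x‖ ^ 2) = c * ‖x‖ ^ 2 := by
      linear_combination ‖x‖ ^ 2 * hcq
    have hL : ‖S x‖ ^ 2 = c * ‖x‖ ^ 2 := by linarith
    have h5 : q * ‖adjoint S x‖ ^ 2 = q * (c * ‖x‖ ^ 2) := by linarith
    exact ⟨hL, mul_left_cancel₀ (ne_of_lt hq) h5⟩
  have hA : (adjoint S).comp S = ((c : ℝ) : ℂ) • ContinuousLinearMap.id ℂ H := by
    have hz : ∀ x : H,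
        ⟪(((adjoint S).comp S - ((c : ℝ) : ℂ) • ContinuousLinearMap.id ℂ H :
          H →L[ℂ] H) : H →ₗ[ℂ] H) x, x⟫_ℂ = 0 := by
      intro x
      simp only [ContinuousLinearMap.coe_coe, sub_apply, smul_apply, comp_apply, id_apply,
        inner_sub_left, inner_smul_left, Complex.conj_ofReal, adjoint_inner_left,
        inner_self_eq_norm_sq_to_K]
      rw [sub_eq_zero]
      simp only [rc_eq']
      exact_mod_cast congrArg Complex.ofReal (key x).1
    have h0 := (inner_map_self_eq_zero _).1 hz
    have : ((adjoint S).comp S - ((c : ℝ) : ℂ) • ContinuousLinearMap.id ℂ H : H →L[ℂ] H) = 0 := by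
      ext x
      exact congrFun (congrArg DFunLike.coe h0) x
    exact sub_eq_zero.1 this
  have hT : S.comp (adjoint S) = ((c : ℝ) : ℂ) • ContinuousLinearMap.id ℂ H := by
    have hz : ∀ x : H,
        ⟪((S.comp (adjoint S) - ((c : ℝ) : ℂ) • ContinuousLinearMap.id ℂ H :
          H →L[ℂ] H) : H →ₗ[ℂ] H) x, x⟫_ℂ = 0 := by
      intro x
      simp only [ContinuousLinearMap.coe_coe, sub_apply, smul_apply, comp_apply, id_apply,
        inner_sub_left, inner_smul_left, Complex.conj_ofReal,
        inner_self_eq_norm_sq_to_K]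
      rw [show S ((adjoint S) x) = (adjoint (adjoint S)) ((adjoint S) x) by
        rw [adjoint_adjoint]]
      rw [adjoint_inner_left, inner_self_eq_norm_sq_to_K]
      rw [sub_eq_zero]
      simp only [rc_eq']
      exact_mod_cast congrArg Complex.ofReal (key x).2
    have h0 := (inner_map_self_eq_zero _).1 hz
    have : (S.comp (adjoint S) - ((c : ℝ) : ℂ) • ContinuousLinearMap.id ℂ H : H →L[ℂ] H) = 0 := by
      ext x
      exact congrFun (congrArg DFunLike.coe h0) x
    exact sub_eq_zero.1 this
  have hadj : adjoint ((Real.sqrt (1 - q) : ℂ) • S)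
      = (Real.sqrt (1 - q) : ℂ) • adjoint S := by
    rw [adjoint.map_smulₛₗ]
    simp [Complex.conj_ofReal]
  have hsq : ((Real.sqrt (1 - q) : ℂ)) * ((Real.sqrt (1 - q) : ℂ)) * (c : ℂ) = 1 := by
    rw [← Complex.ofReal_mul, Real.mul_self_sqrt h1q.le, ← Complex.ofReal_mul,
      mul_inv_cancel₀ (ne_of_gt h1q)]
    norm_num
  refine ⟨?_, ?_, hA, hT⟩
  · rw [hadj, smul_comp, comp_smul, hA, smul_smul, smul_smul, hsq, one_smul]
  · rw [hadj, smul_comp, comp_smul, hT, smul_smul, smul_smul, hsq, one_smul]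
end
end

section
/- Let (c_n)_{n∈ℕ} be a sequence of positive real numbers. The following are equivalent: (A) there exists a positive Borel measure μ on ℂ such that for all m, n ∈ ℕ the function z ↦ z^m (conj z)^n is μ-integrable and ∫_ℂ z^m (conj z)^n dμ(z) = δ_{mn} c_n^{−1}; (B) there exists a Stieltjes moment sequence (a_n)_{n∈ℕ} such that a_{2n} = c_n^{−1} for all n ∈ ℕ. Moreover, if (B) holds, then the measure μ in (A) can be chosen rotationally invariant, i.e. satisfying μ(e^{it} σ) = μ(σ) for every t ∈ ℝ and every Borel set σ ⊆ ℂ. -/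
open MeasureTheory

noncomputable section

/-- `(a n)` is a Stieltjes moment sequence: it is the moment sequence of some positive
Borel measure on `[0, ∞)`. -/
def IsStieltjesMomentSeq (a : ℕ → ℝ) : Prop :=
  ∃ ν : Measure ℝ, ν (Set.Iio 0) = 0 ∧ (∀ n : ℕ, Integrable (fun r => r ^ n) ν) ∧
    ∀ n : ℕ, a n = ∫ r, r ^ n ∂ν

/-- The measure `μ` on `ℂ` is rotationally invariant: `μ(e^{it} σ) = μ(σ)`. -/
def RotInvariant (μ : Measure ℂ) : Prop :=
  ∀ (t : ℝ) (σ : Set ℂ), MeasurableSet σ →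
    μ ((fun z => Complex.exp (Complex.I * (t : ℂ)) * z) '' σ) = μ σ

/-- The measure `μ` on `ℂ` has the monomial moments `∫ z^m conj(z)^n dμ = δ_{mn} (c n)⁻¹`. -/
def RepresentsMoments (μ : Measure ℂ) (c : ℕ → ℝ) : Prop :=
  (∀ m n : ℕ, Integrable (fun z : ℂ => z ^ m * (starRingEnd ℂ z) ^ n) μ) ∧
    ∀ m n : ℕ, (∫ z, z ^ m * (starRingEnd ℂ z) ^ n ∂μ)
      = if m = n then (((c n)⁻¹ : ℝ) : ℂ) else 0


open Real Complex AddCircle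

instance : Fact (0 < 2 * Real.pi) := ⟨by positivity⟩

lemma integral_fourier_haar (k : ℤ) :
    (∫ x : AddCircle (2 * Real.pi), fourier k x ∂haarAddCircle)
      = if k = 0 then 1 else 0 := by
  split_ifs with h
  · subst h
    have : (fun x : AddCircle (2 * Real.pi) => fourier 0 x) = fun _ => (1 : ℂ) := by
      funext x; exact fourier_zero
    rw [this]
    simp
  · exact integral_eq_zero_of_add_right_eq_neg
      (fourier_add_half_inv_index h (by positivity))

lemma pow_toCircle (k : ℕ) (x : AddCircle (2 * Real.pi)) :
    (toCircle x : ℂ) ^ k = fourier (k : ℤ) x := by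
  induction k with
  | zero => simp [fourier_zero]
  | succ k ih =>
      have : ((k : ℤ) + 1) = (k : ℤ) + 1 := rfl
      rw [pow_succ, ih, ← fourier_one (x := x), ← fourier_add]
      norm_num

lemma monomial_toCircle (m n : ℕ) (x : AddCircle (2 * Real.pi)) :
    (toCircle x : ℂ) ^ m * (starRingEnd ℂ) (toCircle x : ℂ) ^ n
      = fourier ((m : ℤ) - n) x := by
  have h1 : (starRingEnd ℂ) (toCircle x : ℂ) ^ n = fourier (-(n : ℤ)) x := by
    rw [← map_pow, pow_toCircle, ← fourier_neg]
  rw [pow_toCircle, h1, ← fourier_add, sub_eq_add_neg]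

lemma integral_monomial_haar (m n : ℕ) :
    (∫ x : AddCircle (2 * Real.pi),
        (toCircle x : ℂ) ^ m * (starRingEnd ℂ) (toCircle x : ℂ) ^ n ∂haarAddCircle)
      = if m = n then 1 else 0 := by
  simp_rw [monomial_toCircle]
  rw [integral_fourier_haar]
  simp [sub_eq_zero]

lemma construct_measure (c : ℕ → ℝ) (a : ℕ → ℝ) (ha : IsStieltjesMomentSeq a)
    (h2 : ∀ n, a (2 * n) = (c n)⁻¹) :
    ∃ μ : Measure ℂ, RotInvariant μ ∧ RepresentsMoments μ c := by
  obtain ⟨ν, -, hint, hmom⟩ := ha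
  haveI : IsFiniteMeasure ν := by
    constructor
    have h0 : Integrable (fun _ : ℝ => (1 : ℝ)) ν := by simpa using hint 0
    rcases integrable_const_iff.mp h0 with h | h
    · norm_num at h
    · exact h.measure_univ_lt_top
  set g : AddCircle (2 * Real.pi) × ℝ → ℂ := fun p => (toCircle p.1 : ℂ) * p.2 with hg
  set P : Measure (AddCircle (2 * Real.pi) × ℝ) := haarAddCircle.prod ν with hP
  have hgc : Continuous g := by
    apply Continuous.mul
    · exact continuous_induced_dom.comp (continuous_toCircle.comp continuous_fst)
    · exact Complex.continuous_ofReal.comp continuous_snd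
  -- composition identity for monomials
  have hcompmono : ∀ m n : ℕ,
      (fun p : AddCircle (2 * Real.pi) × ℝ =>
          (g p) ^ m * (starRingEnd ℂ (g p)) ^ n)
        = fun p => ((toCircle p.1 : ℂ) ^ m * (starRingEnd ℂ) (toCircle p.1 : ℂ) ^ n)
            * ((p.2 : ℂ) ^ (m + n)) := by
    intro m n
    funext p
    simp only [hg, map_mul, Complex.conj_ofReal, mul_pow, pow_add]
    ring
  have hF : ∀ m n : ℕ, Integrable
      (fun x : AddCircle (2 * Real.pi) =>
        (toCircle x : ℂ) ^ m * (starRingEnd ℂ) (toCircle x : ℂ) ^ n) haarAddCircle := by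
    intro m n
    have hconst : Integrable (fun _ : AddCircle (2 * Real.pi) => (1 : ℝ))
        (haarAddCircle : Measure (AddCircle (2 * Real.pi))) := integrable_const _
    refine hconst.mono' ?_ ?_
    · apply Continuous.aestronglyMeasurable
      apply Continuous.mul
      · exact (continuous_induced_dom.comp continuous_toCircle).pow m
      · exact (Complex.continuous_conj.comp (continuous_induced_dom.comp continuous_toCircle)).pow n
    · filter_upwards with x
      simp only [norm_mul, norm_pow, Complex.norm_conj, Circle.norm_coe]
      norm_num
  have hG : ∀ k : ℕ, Integrable (fun r : ℝ => ((r : ℂ)) ^ k) ν := by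
    intro k
    have h := (hint k).ofReal (𝕜 := ℂ)
    simpa [Complex.ofReal_pow] using h
  have hsm : ∀ m n : ℕ, AEStronglyMeasurable
      (fun z : ℂ => z ^ m * (starRingEnd ℂ z) ^ n) (Measure.map g P) := by
    intro m n
    apply Continuous.aestronglyMeasurable
    exact ((continuous_id.pow m).mul (Complex.continuous_conj.pow n))
  refine ⟨Measure.map g P, ?_, ?_, ?_⟩
  · -- rotation invariance
    intro t σ hσ
    have hms : ∀ s : ℝ, Measurable (fun z : ℂ => Complex.exp (Complex.I * s) * z) :=
      fun s => (continuous_const.mul continuous_id).measurable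
    have hkey : ∀ s : ℝ, ∀ z : ℂ,
        Complex.exp (Complex.I * ((-s : ℝ) : ℂ)) * (Complex.exp (Complex.I * s) * z) = z := by
      intro s z
      rw [← mul_assoc, ← Complex.exp_add, ← mul_add]
      push_cast
      simp
    have himg : (fun z => Complex.exp (Complex.I * (t : ℂ)) * z) '' σ
        = (fun z => Complex.exp (Complex.I * ((-t : ℝ) : ℂ)) * z) ⁻¹' σ := by
      ext z
      simp only [Set.mem_image, Set.mem_preimage]
      constructor
      · rintro ⟨w, hw, rfl⟩
        rwa [hkey t w]
      · intro hz
        refine ⟨Complex.exp (Complex.I * ((-t : ℝ) : ℂ)) * z, hz, ?_⟩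
        have := hkey (-t) z
        push_cast at this ⊢
        rwa [neg_neg] at this
    have hrot : ∀ s : ℝ,
        Measure.map (fun z : ℂ => Complex.exp (Complex.I * s) * z) (Measure.map g P)
          = Measure.map g P := by
      intro s
      rw [Measure.map_map (hms s) hgc.measurable]
      have hτm : Measurable (fun p : AddCircle (2 * Real.pi) × ℝ =>
          (((s : AddCircle (2 * Real.pi)) + p.1, p.2) : AddCircle (2 * Real.pi) × ℝ)) :=
        (measurable_fst.const_add (s : AddCircle (2 * Real.pi))).prodMk measurable_snd
      have hcomp : (fun z : ℂ => Complex.exp (Complex.I * s) * z) ∘ g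
          = g ∘ (fun p => ((s : AddCircle (2 * Real.pi)) + p.1, p.2)) := by
        funext p
        have h1 : (toCircle ((s : ℝ) : AddCircle (2 * Real.pi)) : ℂ)
            = Complex.exp (Complex.I * s) := by
          rw [toCircle_apply_mk, Circle.coe_exp]
          rw [div_self (by positivity : (2 * Real.pi) ≠ 0), one_mul, mul_comm]
        simp only [Function.comp, hg, toCircle_add, Circle.coe_mul, h1]
        ring
      rw [hcomp, ← Measure.map_map hgc.measurable hτm]
      have hPinv : Measure.map (fun p : AddCircle (2 * Real.pi) × ℝ =>
          (((s : AddCircle (2 * Real.pi)) + p.1, p.2) : AddCircle (2 * Real.pi) × ℝ)) P = P := by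
        have := ((measurePreserving_add_left (haarAddCircle (T := 2 * Real.pi))
          ((s : ℝ) : AddCircle (2 * Real.pi))).prod (MeasurePreserving.id ν)).map_eq
        convert this using 2
        rfl
      rw [hPinv]
    rw [himg, ← Measure.map_apply (hms (-t)) hσ, hrot (-t)]
  · -- integrability
    intro m n
    rw [integrable_map_measure (hsm m n) hgc.measurable.aemeasurable]
    have : (fun z : ℂ => z ^ m * (starRingEnd ℂ z) ^ n) ∘ g
        = fun p => ((toCircle p.1 : ℂ) ^ m * (starRingEnd ℂ) (toCircle p.1 : ℂ) ^ n)
            * ((p.2 : ℂ) ^ (m + n)) := hcompmono m n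
    rw [this]
    exact (hF m n).mul_prod (hG (m + n))
  · -- moments
    intro m n
    rw [integral_map hgc.measurable.aemeasurable (hsm m n)]
    have : (fun p : AddCircle (2 * Real.pi) × ℝ =>
        (g p) ^ m * (starRingEnd ℂ (g p)) ^ n)
        = fun p => ((toCircle p.1 : ℂ) ^ m * (starRingEnd ℂ) (toCircle p.1 : ℂ) ^ n)
            * ((p.2 : ℂ) ^ (m + n)) := hcompmono m n
    rw [show (∫ p, (g p) ^ m * (starRingEnd ℂ (g p)) ^ n ∂P)
        = ∫ p, ((toCircle p.1 : ℂ) ^ m * (starRingEnd ℂ) (toCircle p.1 : ℂ) ^ n)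
            * ((p.2 : ℂ) ^ (m + n)) ∂P from by rw [this]]
    rw [hP]
    rw [integral_prod_mul
      (f := fun x : AddCircle (2 * Real.pi) =>
        (toCircle x : ℂ) ^ m * (starRingEnd ℂ) (toCircle x : ℂ) ^ n)
      (g := fun r : ℝ => ((r : ℂ)) ^ (m + n)), integral_monomial_haar]
    split_ifs with h
    · subst h
      rw [one_mul]
      have hℝ : (∫ r : ℝ, ((r : ℂ)) ^ (m + m) ∂ν) = ((∫ r : ℝ, r ^ (m + m) ∂ν : ℝ) : ℂ) := by
        simp_rw [← Complex.ofReal_pow]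
        exact integral_ofReal
      rw [hℝ, ← hmom (m + m)]
      rw [show m + m = 2 * m from by ring, h2 m]
    · exact zero_mul _

lemma forward_dir (c : ℕ → ℝ) (μ : Measure ℂ) (h : RepresentsMoments μ c) :
    ∃ a : ℕ → ℝ, IsStieltjesMomentSeq a ∧ ∀ n, a (2 * n) = (c n)⁻¹ := by
  obtain ⟨hintg, hmom⟩ := h
  have habs : Measurable fun z : ℂ => ‖z‖ := continuous_norm.measurable
  set ν : Measure ℝ := Measure.map (fun z : ℂ => ‖z‖) μ with hν
  have hIio : ν (Set.Iio 0) = 0 := by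
    rw [hν, Measure.map_apply habs measurableSet_Iio]
    have he : (fun z : ℂ => ‖z‖) ⁻¹' (Set.Iio 0) = ∅ := by
      ext z
      simp [Set.mem_Iio, not_lt.mpr (norm_nonneg z)]
    rw [he, measure_empty]
  have hIntn : ∀ n : ℕ, Integrable (fun z : ℂ => ‖z‖ ^ n) μ := by
    intro n
    have h1 : Integrable (fun _ : ℂ => (1 : ℝ)) μ := by
      have := (hintg 0 0).norm
      simpa using this
    have h2 : Integrable (fun z : ℂ => ‖z‖ ^ (2 * n)) μ := by
      have h := (hintg n n).norm
      have he : (fun z : ℂ => ‖z ^ n * (starRingEnd ℂ z) ^ n‖)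
          = fun z : ℂ => ‖z‖ ^ (2 * n) := by
        funext z
        rw [norm_mul, norm_pow, norm_pow, Complex.norm_conj,
          ← pow_add, two_mul]
      rwa [he] at h
    refine (h1.add h2).mono' ?_ ?_
    · exact (continuous_norm.pow n).aestronglyMeasurable
    · filter_upwards with z
      rw [Real.norm_eq_abs, _root_.abs_of_nonneg (by positivity)]
      simp only [Pi.add_apply]
      rcases le_total (‖z‖) 1 with hle | hle
      · have : ‖z‖ ^ n ≤ 1 := pow_le_one₀ (norm_nonneg z) hle
        have h0 : (0 : ℝ) ≤ ‖z‖ ^ (2 * n) := by positivity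
        linarith
      · have : ‖z‖ ^ n ≤ ‖z‖ ^ (2 * n) :=
          pow_le_pow_right₀ hle (by omega)
        linarith
  have hsm : ∀ n : ℕ, AEStronglyMeasurable (fun r : ℝ => r ^ n) ν :=
    fun n => (continuous_pow n).aestronglyMeasurable
  refine ⟨fun n => ∫ r, r ^ n ∂ν, ⟨ν, hIio, ?_, fun n => rfl⟩, ?_⟩
  · intro n
    rw [hν, integrable_map_measure (hsm n) habs.aemeasurable]
    exact hIntn n
  · intro n
    have h1 : (∫ r, r ^ (2 * n) ∂ν) = ∫ z, ‖z‖ ^ (2 * n) ∂μ := by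
      rw [hν, integral_map habs.aemeasurable (hsm (2 * n))]
    have h2 := hmom n n
    rw [if_pos rfl] at h2
    have h3 : (fun z : ℂ => z ^ n * (starRingEnd ℂ z) ^ n)
        = fun z : ℂ => ((‖z‖ ^ (2 * n) : ℝ) : ℂ) := by
      funext z
      rw [← mul_pow, Complex.mul_conj, ← Complex.sq_norm]
      push_cast
      ring
    rw [h3] at h2
    have h4 : (∫ z : ℂ, ((‖z‖ ^ (2 * n) : ℝ) : ℂ) ∂μ)
        = (((∫ z : ℂ, ‖z‖ ^ (2 * n) ∂μ : ℝ)) : ℂ) := integral_ofReal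
    rw [h4] at h2
    show (∫ r, r ^ (2 * n) ∂ν) = (c n)⁻¹
    rw [h1]
    exact_mod_cast h2

/-- For positive `(c n)`: a measure `μ` on `ℂ` with
`∫ z^m conj(z)^n dμ = δ_{mn} (c n)⁻¹` exists iff there is a Stieltjes moment sequence
`(a n)` with `a (2n) = (c n)⁻¹`; and if so, `μ` can be chosen rotationally invariant. -/
theorem stmt18 (c : ℕ → ℝ) (hc : ∀ n, 0 < c n) :
    ((∃ μ : Measure ℂ, RepresentsMoments μ c) ↔
      (∃ a : ℕ → ℝ, IsStieltjesMomentSeq a ∧ ∀ n, a (2 * n) = (c n)⁻¹)) ∧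
    ((∃ a : ℕ → ℝ, IsStieltjesMomentSeq a ∧ ∀ n, a (2 * n) = (c n)⁻¹) →
      ∃ μ : Measure ℂ, RotInvariant μ ∧ RepresentsMoments μ c) := by
  constructor
  · constructor
    · rintro ⟨μ, hμ⟩
      exact forward_dir c μ hμ
    · rintro ⟨a, ha, h2⟩
      obtain ⟨μ, -, hμ⟩ := construct_measure c a ha h2
      exact ⟨μ, hμ⟩
  · rintro ⟨a, ha, h2⟩
    exact construct_measure c a ha h2
end
end
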